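/- arXiv:1602.08786 — 13 statements merged into one kernel-verified Lean document; each statement's English description precedes it below -/
import Mathlib

section
/- Let B be a commutative domain of characteristic zero, D a locally nilpotent derivation of B with kernel A, and r ∈ B a local slice of D with f = Dr. If S ⊆ B is a subalgebra satisfying A[r] ⊆ S and fB ∩ S = fS, then S = B. -/
open Finset in
lemma gp_key {k B : Type*} [Field k] [CharZero k] [CommRing B]
    [Algebra k B] (D : Derivation k B B)
    (r : B) (hr2 : D (D r) = 0) :
    ∀ m : ℕ, ∀ b : B, (D.toLinearMap ^ (m + 1)) b = 0 →
      (D r) ^ m * b ∈ Algebra.adjoin k ({b : B | D b = 0} ∪ {r}) := by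
  intro m
  induction m using Nat.strong_induction_on with
  | _ m ih =>
    intro b hb
    set f : B := D r with hf
    set A : Subalgebra k B := Algebra.adjoin k ({b : B | D b = 0} ∪ {r}) with hA
    have hrA : r ∈ A := Algebra.subset_adjoin (Set.mem_union_right _ rfl)
    have hDfpow : ∀ j : ℕ, D (f ^ j) = 0 := by
      intro j
      rw [Derivation.leibniz_pow, hr2]
      simp
    -- coefficients
    set c : ℕ → k := fun i => (-1 : k) ^ i * ((i.factorial : k))⁻¹ with hc
    set κ : ℕ → B := fun i => algebraMap k B (c i) with hκ
    have hκ0 : κ 0 = 1 := by simp [hκ, hc]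
    have hκrec : ∀ i : ℕ, ((i : B) + 1) * κ (i + 1) = -κ i := by
      intro i
      have h1 : ((i : k) + 1) * c (i + 1) = -c i := by
        have hne : ((i.factorial : k)) ≠ 0 := by
          exact_mod_cast Nat.cast_ne_zero.mpr i.factorial_ne_zero
        have hne2 : ((i : k) + 1) ≠ 0 := Nat.cast_add_one_ne_zero i
        rw [hc]
        simp only [Nat.factorial_succ, Nat.cast_mul, pow_succ]
        push_cast
        field_simp
      calc ((i : B) + 1) * κ (i + 1)
          = algebraMap k B (((i : k) + 1) * c (i + 1)) := by
            rw [map_mul, map_add, map_one, map_natCast]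
        _ = -κ i := by rw [h1, map_neg]
    set g : ℕ → B := fun i => κ i * ((D.toLinearMap ^ i) b * r ^ i * f ^ (m - i)) with hg
    set t : ℕ → B := fun i => κ i * ((D.toLinearMap ^ (i + 1)) b * r ^ i * f ^ (m - i)) with ht
    set u : ℕ → B := fun i => ((i : B) * κ i) * ((D.toLinearMap ^ i) b * r ^ (i - 1) * f ^ (m - i + 1)) with hu
    have hκD : ∀ i, D (κ i) = 0 := fun i => Derivation.map_algebraMap D (c i)
    have hpow : ∀ i, (D.toLinearMap ^ (i + 1)) b = D ((D.toLinearMap ^ i) b) := by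
      intro i
      rw [pow_succ']
      rfl
    have hDg : ∀ i, D (g i) = t i + u i := by
      intro i
      rw [hg]
      simp only
      rw [Derivation.leibniz, hκD, Derivation.leibniz, hDfpow, Derivation.leibniz,
        Derivation.leibniz_pow]
      simp only [smul_eq_mul, mul_zero, zero_mul, add_zero, ht, hu, hpow]
      rw [nsmul_eq_mul]
      rw [show m - i + 1 = (m - i) + 1 from rfl, pow_succ]
      ring
    set a : B := ∑ i ∈ range (m + 1), g i with ha
    have hDa : D a = 0 := by
      rw [ha, map_sum]
      rw [Finset.sum_congr rfl (fun i _ => hDg i)]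
      rw [Finset.sum_add_distrib]
      rw [Finset.sum_range_succ (f := t), Finset.sum_range_succ' (f := u)]
      have htm : t m = 0 := by rw [ht]; simp [hb]
      have hu0 : u 0 = 0 := by rw [hu]; simp
      have huc : ∀ i ∈ range m, u (i + 1) = -t i := by
        intro i hi
        have him : i < m := Finset.mem_range.mp hi
        rw [hu, ht]
        simp only [Nat.cast_add, Nat.cast_one, Nat.add_sub_cancel]
        have h2 : m - (i + 1) + 1 = m - i := by omega
        rw [h2]
        rw [show ((i : B) + 1) * κ (i + 1) * ((D.toLinearMap ^ (i + 1)) b * r ^ i * f ^ (m - i))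
          = (((i : B) + 1) * κ (i + 1)) * ((D.toLinearMap ^ (i + 1)) b * r ^ i * f ^ (m - i)) from by ring,
          hκrec i]
        ring
      rw [htm, hu0, Finset.sum_congr rfl huc]
      simp [Finset.sum_neg_distrib]
    have haA : a ∈ A := Algebra.subset_adjoin (Set.mem_union_left _ hDa)
    -- f ^ m * b = a - ∑_{i < m} g (i+1)
    have hsplit : a = f ^ m * b + ∑ i ∈ range m, g (i + 1) := by
      rw [ha, Finset.sum_range_succ' (f := g)]
      have : g 0 = f ^ m * b := by rw [hg]; simp [hκ0]; ring
      rw [this]; ring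
    have hterm : ∀ i ∈ range m, g (i + 1) ∈ A := by
      intro i hi
      have him : i < m := Finset.mem_range.mp hi
      have hlt : m - (i + 1) < m := by omega
      have hb' : (D.toLinearMap ^ (m - (i + 1) + 1)) ((D.toLinearMap ^ (i + 1)) b) = 0 := by
        rw [← Module.End.mul_apply, ← pow_add]
        rw [show m - (i + 1) + 1 + (i + 1) = m + 1 from by omega]
        exact hb
      have hmem := ih (m - (i + 1)) hlt ((D.toLinearMap ^ (i + 1)) b) hb'
      have : g (i + 1) = κ (i + 1) * r ^ (i + 1) * (f ^ (m - (i + 1)) * (D.toLinearMap ^ (i + 1)) b) := by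
        rw [hg]; ring
      rw [this]
      exact mul_mem (mul_mem (Subalgebra.algebraMap_mem A _) (pow_mem hrA _)) hmem
    have : f ^ m * b = a - ∑ i ∈ range m, g (i + 1) := by rw [hsplit]; ring
    rw [this]
    exact sub_mem haA (sum_mem hterm)

/-- **Generating Principle.** Let `B` be a commutative domain of characteristic zero
(an algebra over a field `k` of characteristic zero), `D` a locally nilpotent derivation
of `B`, `r` a local slice of `D` with `f = D r`. If `S ⊆ B` is a subalgebra containing
`A[r]` (where `A = ker D`) and satisfying `fB ∩ S = fS`, then `S = B`. -/
theorem generating_principle {k B : Type*} [Field k] [CharZero k] [CommRing B] [IsDomain B]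
    [Algebra k B] (D : Derivation k B B)
    (hln : ∀ b : B, ∃ n : ℕ, (D.toLinearMap ^ n) b = 0)
    (r : B) (hr2 : D (D r) = 0) (hr1 : D r ≠ 0)
    (S : Subalgebra k B)
    (hAr : Algebra.adjoin k ({b : B | D b = 0} ∪ {r}) ≤ S)
    (hfS : {x : B | (∃ b : B, x = D r * b) ∧ x ∈ S} = (fun s => D r * s) '' (S : Set B)) :
    S = ⊤ := by
  have descend : ∀ j : ℕ, ∀ x : B, (D r) ^ j * x ∈ S → x ∈ S := by
    intro j
    induction j with
    | zero => intro x hx; simpa using hx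
    | succ j ihj =>
      intro x hx
      have hx' : (D r) ^ (j + 1) * x ∈ {x : B | (∃ b : B, x = D r * b) ∧ x ∈ S} :=
        ⟨⟨(D r) ^ j * x, by ring⟩, hx⟩
      rw [hfS] at hx'
      obtain ⟨s, hsS, hs⟩ := hx'
      have : s = (D r) ^ j * x := by
        apply mul_left_cancel₀ hr1
        simp only at hs
        rw [hs]; ring
      exact ihj x (this ▸ hsS)
  rw [eq_top_iff]
  intro b _
  obtain ⟨n, hn⟩ := hln b
  have hn' : (D.toLinearMap ^ (n + 1)) b = 0 := by
    rw [pow_succ', Module.End.mul_apply, hn]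
    simp
  exact descend n b (hAr (gp_key D r hr2 n b hn'))
end

section
/- Let B be a commutative domain of characteristic zero, D a locally nilpotent derivation with kernel A, and define the degree modules F_n = ker D^{n+1}. If A is a noetherian ring, then F_n is a noetherian A-module for each n ≥ 0. -/
set_option maxHeartbeats 1600000

/-- If `D` is a locally nilpotent derivation of a commutative domain `B` of characteristic
zero with kernel `A`, and `A` is a noetherian ring, then each degree module
`F_n = ker D^{n+1}` is a noetherian `A`-module. -/
theorem degree_module_noetherian {k B : Type*} [Field k] [CharZero k] [CommRing B]
    [IsDomain B] [Algebra k B] (D : Derivation k B B)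
    (hln : ∀ b : B, ∃ n : ℕ, (D.toLinearMap ^ n) b = 0)
    (A : Subalgebra k B) (hA : ∀ b : B, b ∈ A ↔ D b = 0)
    (hnoeth : IsNoetherianRing A)
    (n : ℕ) (Fn : Submodule A B)
    (hFn : ∀ x : B, x ∈ Fn ↔ (D.toLinearMap ^ (n + 1)) x = 0) :
    IsNoetherian A Fn := by
  -- D as an A-linear map
  have hsmul : ∀ (a : A) (x : B), D (a • x) = a • D x := by
    intro a x
    have ha : D (a : B) = 0 := (hA a).1 a.2
    show D ((a : B) * x) = (a : B) * D x
    rw [D.leibniz, ha]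
    simp [smul_eq_mul]
  set Dlin : B →ₗ[A] B :=
    { toFun := D
      map_add' := D.map_add
      map_smul' := hsmul } with hDlin
  have hpow : ∀ (m : ℕ) (x : B), (Dlin ^ m) x = (D.toLinearMap ^ m) x := by
    intro m
    induction m with
    | zero => intro x; simp
    | succ m ih =>
      intro x
      rw [pow_succ, pow_succ, Module.End.mul_apply, Module.End.mul_apply, ih]
      rfl
  -- the A-submodule of B given by A itself, as the range of the algebra map
  have hArange : IsNoetherian A (LinearMap.range (Algebra.linearMap A B)) := by
    have : IsNoetherian A A := hnoeth
    exact isNoetherian_range (Algebra.linearMap A B)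
  -- each kernel of `Dlin ^ m` is Noetherian, by induction on `m`
  have key : ∀ m : ℕ, IsNoetherian A (LinearMap.ker (Dlin ^ m)) := by
    intro m
    induction m with
    | zero =>
      have : LinearMap.ker (Dlin ^ 0) = ⊥ := by
        ext x; simp
      rw [this]
      infer_instance
    | succ m ih =>
      -- exact sequence: ker(D^m) → ker(D^(m+1)) → A
      set N := LinearMap.ker (Dlin ^ (m + 1)) with hN
      set M := LinearMap.ker (Dlin ^ m) with hM
      have hMN : M ≤ N := by
        intro x hx
        simp only [hM, LinearMap.mem_ker] at hx
        simp only [hN, LinearMap.mem_ker, pow_succ', Module.End.mul_apply, hx, map_zero]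
      -- map g : N → range(A → B), x ↦ D^m x
      have hmem : ∀ x : N, ((Dlin ^ m).comp N.subtype) x ∈
          LinearMap.range (Algebra.linearMap A B) := by
        intro x
        have hx' : (Dlin ^ (m + 1)) (x : B) = 0 := x.2
        rw [pow_succ', Module.End.mul_apply] at hx'
        have hmA : ((Dlin ^ m) (x : B)) ∈ A := (hA _).2 hx'
        exact ⟨⟨_, hmA⟩, rfl⟩
      set g : N →ₗ[A] (LinearMap.range (Algebra.linearMap A B)) :=
        LinearMap.codRestrict _ ((Dlin ^ m).comp N.subtype) hmem with hg
      set f : M →ₗ[A] N := Submodule.inclusion hMN with hf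
      haveI := hArange
      haveI := ih
      refine isNoetherian_of_range_eq_ker f g ?_
      rw [hf, hg, LinearMap.ker_codRestrict, LinearMap.ker_comp,
        Submodule.range_inclusion]
  -- identify Fn with ker (Dlin ^ (n+1))
  have hFnEq : Fn = LinearMap.ker (Dlin ^ (n + 1)) := by
    ext x
    rw [hFn, LinearMap.mem_ker, hpow]
  rw [hFnEq]
  exact key (n + 1)
end

section
/- Let B be a commutative domain of characteristic zero and D a locally nilpotent derivation with kernel A. For integers 1 ≤ i ≤ n, the sequence of A-modules 0 → F_{i-1} → F_n →^{D^i} D^i F_n → 0 is exact, where F_m = ker D^{m+1}. In particular, F_n / F_{n-1} is isomorphic as an A-module to the image ideal I_n = D^n F_n = A ∩ D^n B. -/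
set_option synthInstance.maxHeartbeats 400000
set_option maxHeartbeats 1000000

/-- For a locally nilpotent derivation `D` of a commutative domain `B` of characteristic
zero with kernel `A`, and `1 ≤ i ≤ n`, the sequence of `A`-modules
`0 → F_{i-1} → F_n → D^i F_n → 0` is exact, where `F_m = ker D^{m+1}`; in particular
`F_n / F_{n-1}` is isomorphic as an `A`-module to the image ideal `I_n = D^n F_n = A ∩ D^n B`. -/
theorem degree_module_exact_sequence {k B : Type*} [Field k] [CharZero k] [CommRing B]
    [IsDomain B] [Algebra k B] (D : Derivation k B B)
    (hln : ∀ b : B, ∃ n : ℕ, (D.toLinearMap ^ n) b = 0)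
    (A : Subalgebra k B) (hA : ∀ b : B, b ∈ A ↔ D b = 0)
    (F : ℕ → Submodule A B)
    (hF : ∀ (m : ℕ) (x : B), x ∈ F m ↔ (D.toLinearMap ^ (m + 1)) x = 0)
    (n i : ℕ) (h1 : 1 ≤ i) (hin : i ≤ n)
    (In : Submodule A B)
    (hIn : ∀ x : B, x ∈ In ↔ (D x = 0 ∧ ∃ b : B, (D.toLinearMap ^ n) b = x)) :
    (∀ x : B, x ∈ F (i - 1) ↔ x ∈ F n ∧ (D.toLinearMap ^ i) x = 0) ∧
    ((In : Set B) = (D.toLinearMap ^ n) '' (F n : Set B)) ∧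
    Nonempty ((↥(F n) ⧸ (F (n - 1)).comap (F n).subtype) ≃ₗ[A] In) := by
  have hsmul : ∀ (a : A) (b : B), (a : B) * b = a • b := by
    intro a b; rfl
  have hDsmul : ∀ (m : ℕ) (a : A) (b : B),
      (D.toLinearMap ^ m) (a • b) = a • (D.toLinearMap ^ m) b := by
    intro m a b
    induction m with
    | zero => simp
    | succ m ih =>
      rw [pow_succ', Module.End.mul_apply, Module.End.mul_apply, ih]
      show D ((a:B) * _) = (a:B) * D _
      rw [Derivation.leibniz, (hA (a:B)).mp a.2]
      simp [smul_eq_mul, mul_comm]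
  have hpowadd : ∀ (m l : ℕ) (x : B),
      (D.toLinearMap ^ (m + l)) x = (D.toLinearMap ^ m) ((D.toLinearMap ^ l) x) := by
    intro m l x; rw [pow_add]; rfl
  -- part 1
  have part1 : ∀ x : B, x ∈ F (i - 1) ↔ x ∈ F n ∧ (D.toLinearMap ^ i) x = 0 := by
    intro x
    have hi : i - 1 + 1 = i := Nat.succ_pred_eq_of_pos h1
    rw [hF, hF, hi]
    constructor
    · intro h
      refine ⟨?_, h⟩
      have : n + 1 = (n + 1 - i) + i := by omega
      rw [this, hpowadd, h, map_zero]
    · exact fun h => h.2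
  have hn1 : n - 1 + 1 = n := Nat.succ_pred_eq_of_pos (le_trans h1 hin)
  -- part 2
  have part2 : (In : Set B) = (D.toLinearMap ^ n) '' (F n : Set B) := by
    ext x
    simp only [Set.mem_image, SetLike.mem_coe, hIn, hF]
    constructor
    · rintro ⟨hx, b, hb⟩
      refine ⟨b, ?_, hb⟩
      rw [pow_succ', Module.End.mul_apply]
      show D ((D.toLinearMap ^ n) b) = 0
      rw [hb]; exact hx
    · rintro ⟨b, hb, rfl⟩
      refine ⟨?_, b, rfl⟩
      have := hb
      rw [pow_succ', Module.End.mul_apply] at this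
      exact this
  refine ⟨part1, part2, ?_⟩
  -- construct the map
  let f : (↥(F n)) →ₗ[A] In :=
    { toFun := fun x => ⟨(D.toLinearMap ^ n) (x : B), by
        rw [hIn]
        constructor
        · have hx := (hF n x).mp x.2
          rw [pow_succ', Module.End.mul_apply] at hx
          exact hx
        · exact ⟨x, rfl⟩⟩
      map_add' := fun x y => by
        ext; simp
      map_smul' := fun a x => by
        ext
        simp only [RingHom.id_apply]
        show (D.toLinearMap ^ n) ((a • x : ↥(F n)) : B) = a • (D.toLinearMap ^ n) (x : B)
        rw [Submodule.coe_smul, hDsmul] }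
  have hker : LinearMap.ker f = (F (n - 1)).comap (F n).subtype := by
    ext x
    simp only [LinearMap.mem_ker, Submodule.mem_comap, Submodule.coe_subtype]
    rw [hF, hn1]
    constructor
    · intro h
      have := congrArg (Subtype.val) h
      exact this
    · intro h
      exact Subtype.ext h
  have hsurj : Function.Surjective f := by
    rintro ⟨y, hy⟩
    have : y ∈ (D.toLinearMap ^ n) '' (F n : Set B) := by rw [← part2]; exact hy
    obtain ⟨b, hb, rfl⟩ := this
    exact ⟨⟨b, hb⟩, rfl⟩
  have e := f.quotKerEquivOfSurjective hsurj
  rw [hker] at e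
  exact ⟨e⟩
end

section
/- Let B be a commutative domain of characteristic zero, D a locally nilpotent derivation with kernel A, r a local slice with f = Dr, and n ≥ 1. Let M_0 be an A-submodule of B with G_n(r) := A[r] ∩ F_n ⊆ M_0 ⊆ F_n, and define inductively M_i = { h ∈ B : f h ∈ M_{i-1} }. Then F_n = ∪_{i≥0} M_i. -/
set_option linter.unusedSectionVars false
set_option linter.unusedVariables false

section aux
variable {k B : Type*} [Field k] [CharZero k] [CommRing B] [IsDomain B] [Algebra k B]
  (D : Derivation k B B)

lemma aux_pow_mul (a : B) (ha : D a = 0) : ∀ (m : ℕ) (x : B),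
    (D.toLinearMap ^ m) (a * x) = a * (D.toLinearMap ^ m) x := by
  intro m
  induction m with
  | zero => intro x; simp
  | succ m ih =>
    intro x
    simp only [pow_succ', Module.End.mul_apply]
    rw [ih]
    show D (a * _) = a * D _
    rw [Derivation.leibniz, ha, smul_zero, add_zero, smul_eq_mul]

lemma aux_ker_adjoin (s : B) (hs : s ∈ Algebra.adjoin k {b : B | D b = 0}) : D s = 0 := by
  induction hs using Algebra.adjoin_induction with
  | mem x hx => exact hx
  | algebraMap c => simp
  | add x y _ _ hx hy => rw [map_add, hx, hy, add_zero]
  | mul x y _ _ hx hy => rw [Derivation.leibniz, hx, hy, smul_zero, smul_zero, add_zero]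

lemma aux_span_mul (r : B) (A' : Subalgebra k B) :
    ∀ x ∈ Submodule.span A' {x : B | ∃ i : ℕ, x = r ^ i},
    ∀ y ∈ Submodule.span A' {x : B | ∃ i : ℕ, x = r ^ i},
      x * y ∈ Submodule.span A' {x : B | ∃ i : ℕ, x = r ^ i} := by
  intro x hx
  induction hx using Submodule.span_induction with
  | mem z hz =>
    intro y hy
    induction hy using Submodule.span_induction with
    | mem w hw =>
      rcases hz with ⟨i, rfl⟩; rcases hw with ⟨j, rfl⟩
      rw [← pow_add]
      exact Submodule.subset_span ⟨i + j, rfl⟩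
    | zero => rw [mul_zero]; exact Submodule.zero_mem _
    | add w w' _ _ hw hw' => rw [mul_add]; exact Submodule.add_mem _ hw hw'
    | smul c w _ hw => rw [mul_smul_comm]; exact Submodule.smul_mem _ c hw
  | zero => intro y hy; rw [zero_mul]; exact Submodule.zero_mem _
  | add z z' _ _ hz hz' =>
    intro y hy; rw [add_mul]; exact Submodule.add_mem _ (hz y hy) (hz' y hy)
  | smul c z _ hz =>
    intro y hy; rw [smul_mul_assoc]; exact Submodule.smul_mem _ c (hz y hy)

lemma aux_integrate (r : B) :
    ∀ s ∈ Algebra.adjoin k ({b : B | D b = 0} ∪ {r}),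
      ∃ g ∈ Algebra.adjoin k ({b : B | D b = 0} ∪ {r}), D g = D r * s := by
  set S := Algebra.adjoin k ({b : B | D b = 0} ∪ {r}) with hS
  set A' := Algebra.adjoin k {b : B | D b = 0} with hA'
  have hspan : ∀ s ∈ S, s ∈ Submodule.span A' {x : B | ∃ i : ℕ, x = r ^ i} := by
    intro s hs
    induction hs using Algebra.adjoin_induction with
    | mem x hx =>
      rcases hx with hx | hx
      · have : x = (⟨x, Algebra.subset_adjoin hx⟩ : A') • (r ^ 0) := by
          rw [pow_zero, Algebra.smul_def, mul_one]; rfl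
        rw [this]
        exact Submodule.smul_mem _ _ (Submodule.subset_span ⟨0, rfl⟩)
      · rcases hx with rfl
        exact Submodule.subset_span ⟨1, (pow_one x).symm⟩
    | algebraMap c =>
      have : (algebraMap k B) c = ((algebraMap k A') c : A') • (r ^ 0) := by
        rw [pow_zero, Algebra.smul_def, mul_one, ← IsScalarTower.algebraMap_apply]
      rw [this]
      exact Submodule.smul_mem _ _ (Submodule.subset_span ⟨0, rfl⟩)
    | add x y _ _ hx hy => exact Submodule.add_mem _ hx hy
    | mul x y _ _ hx hy => exact aux_span_mul r A' x hx y hy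
  intro s hs
  have hs' := hspan s hs
  clear hs
  induction hs' using Submodule.span_induction with
  | mem x hx =>
    rcases hx with ⟨i, rfl⟩
    refine ⟨((i + 1 : ℕ) : k)⁻¹ • r ^ (i + 1), ?_, ?_⟩
    · apply Subalgebra.smul_mem
      apply pow_mem
      apply Algebra.subset_adjoin
      exact Or.inr rfl
    rw [Derivation.map_smul, Derivation.leibniz_pow, Nat.add_sub_cancel,
      ← Nat.cast_smul_eq_nsmul k (i + 1) (r ^ i • D r), smul_smul,
      inv_mul_cancel₀ (Nat.cast_ne_zero.mpr (Nat.succ_ne_zero i)), one_smul, smul_eq_mul]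
    ring
  | zero => exact ⟨0, Subalgebra.zero_mem _, by simp⟩
  | add x y _ _ hx hy =>
    rcases hx with ⟨g1, hg1, hg1'⟩
    rcases hy with ⟨g2, hg2, hg2'⟩
    exact ⟨g1 + g2, Subalgebra.add_mem _ hg1 hg2, by rw [map_add, hg1', hg2', mul_add]⟩
  | smul c x _ hx =>
    rcases hx with ⟨g, hg, hg'⟩
    refine ⟨(c : B) * g, ?_, ?_⟩
    · exact Subalgebra.mul_mem _ (Algebra.adjoin_mono Set.subset_union_left c.2) hg
    · have hc : D (c : B) = 0 := aux_ker_adjoin D _ c.2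
      rw [Derivation.leibniz, hc, smul_zero, add_zero, smul_eq_mul, hg',
        Algebra.smul_def]
      have : (algebraMap A' B) c = (c : B) := rfl
      rw [this]; ring

lemma aux_fn_mem (r : B) (hr2 : D (D r) = 0) :
    ∀ (m : ℕ) (x : B), (D.toLinearMap ^ (m + 1)) x = 0 →
      (D r) ^ m * x ∈ Algebra.adjoin k ({b : B | D b = 0} ∪ {r}) := by
  intro m
  induction m with
  | zero =>
    intro x hx
    simp only [pow_zero, one_mul]
    exact Algebra.subset_adjoin (Or.inl (by simpa using hx))
  | succ m ih =>
    intro x hx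
    have hDx : (D.toLinearMap ^ (m + 1)) (D x) = 0 := by
      have h1 : (D.toLinearMap ^ (m + 1 + 1)) x = (D.toLinearMap ^ (m + 1)) (D x) := by
        rw [pow_succ, Module.End.mul_apply]; rfl
      rw [← h1, hx]
    obtain ⟨g, hg, hg'⟩ := aux_integrate D r _ (ih (D x) hDx)
    have hf : D ((D r) ^ (m + 1)) = 0 := by
      rw [Derivation.leibniz_pow, hr2, smul_zero, smul_zero]
    have hker : D ((D r) ^ (m + 1) * x - g) = 0 := by
      rw [map_sub, Derivation.leibniz, hf, smul_zero, add_zero, hg', smul_eq_mul]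
      ring
    have h2 : (D r) ^ (m + 1) * x = ((D r) ^ (m + 1) * x - g) + g := by ring
    rw [h2]
    exact Subalgebra.add_mem _ (Algebra.subset_adjoin (Or.inl hker)) hg

end aux

/-- Let `D` be a locally nilpotent derivation of a commutative domain `B` of characteristic
zero with kernel `A`, `r` a local slice with `f = D r`, and `n ≥ 1`. If `M 0` is an
`A`-submodule of `B` with `G_n(r) = A[r] ∩ F_n ⊆ M 0 ⊆ F_n`, and
`M (i+1) = { h ∈ B : f h ∈ M i }`, then `F_n = ⋃ i, M i`. -/
theorem degree_module_eq_iUnion {k B : Type*} [Field k] [CharZero k] [CommRing B]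
    [IsDomain B] [Algebra k B] (D : Derivation k B B)
    (hln : ∀ b : B, ∃ n : ℕ, (D.toLinearMap ^ n) b = 0)
    (A : Subalgebra k B) (hA : ∀ b : B, b ∈ A ↔ D b = 0)
    (r : B) (hr2 : D (D r) = 0) (hr1 : D r ≠ 0)
    (n : ℕ) (hn : 1 ≤ n)
    (M : ℕ → Submodule A B)
    (hGM : (Algebra.adjoin k ({b : B | D b = 0} ∪ {r}) : Set B) ∩
        {x : B | (D.toLinearMap ^ (n + 1)) x = 0} ⊆ (M 0 : Set B))
    (hMF : ∀ x ∈ M 0, (D.toLinearMap ^ (n + 1)) x = 0)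
    (hM : ∀ (i : ℕ) (h : B), h ∈ M (i + 1) ↔ D r * h ∈ M i) :
    {x : B | (D.toLinearMap ^ (n + 1)) x = 0} = ⋃ i : ℕ, (M i : Set B) := by
  apply Set.eq_of_subset_of_subset
  · intro x hx
    have hfx : (D r) ^ n * x ∈ Algebra.adjoin k ({b : B | D b = 0} ∪ {r}) :=
      aux_fn_mem D r hr2 n x hx
    have hfxF : (D.toLinearMap ^ (n + 1)) ((D r) ^ n * x) = 0 := by
      have hf : D ((D r) ^ n) = 0 := by
        rw [Derivation.leibniz_pow, hr2, smul_zero, smul_zero]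
      rw [aux_pow_mul D _ hf, hx, mul_zero]
    have h0 : (D r) ^ n * x ∈ M 0 := hGM ⟨hfx, hfxF⟩
    have key : ∀ (i : ℕ) (y : B), (D r) ^ i * y ∈ M 0 → y ∈ M i := by
      intro i
      induction i with
      | zero => intro y hy; simpa using hy
      | succ i ih =>
        intro y hy
        rw [hM]
        apply ih
        rw [← mul_assoc, ← pow_succ]
        exact hy
    exact Set.mem_iUnion.mpr ⟨n, key n x h0⟩
  · intro x hx
    rw [Set.mem_iUnion] at hx
    obtain ⟨i, hxi⟩ := hx
    have key : ∀ (j : ℕ) (y : B), y ∈ M j → (D.toLinearMap ^ (n + 1)) y = 0 := by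
      intro j
      induction j with
      | zero => exact hMF
      | succ j ih =>
        intro y hy
        have h1 := ih _ ((hM j y).mp hy)
        rw [aux_pow_mul D _ hr2] at h1
        exact (mul_eq_zero.mp h1).resolve_left hr1
    exact key i x hxi
end

section
/- In the setting of the ascending chain M_0 ⊆ M_1 ⊆ M_2 ⊆ ⋯ of A-submodules of F_n defined by M_i = { h ∈ B : f^i h ∈ M_0 } with G_n(r) ⊆ M_0 ⊆ F_n, the following are equivalent: (1) fB ∩ M_s = f M_s for some s ≥ 0; (2) M_s = M_{s+1} for some s ≥ 0; (3) the chain stabilizes; (4) F_n = M_s for some s ≥ 0. Moreover, if A is noetherian, these conditions hold. -/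
private def degExpo : ℕ → ℕ
  | 0 => 0
  | (m+1) => degExpo m + (m + 1)

private lemma aux_ker_mul {k B : Type*} [Field k] [CharZero k] [CommRing B] [Algebra k B]
    (D : Derivation k B B) (c : B) (hc : D c = 0) (j : ℕ) :
    ∀ h : B, (D.toLinearMap ^ j) (c * h) = c * (D.toLinearMap ^ j) h := by
  induction j with
  | zero => intro h; simp
  | succ j ih =>
    intro h
    rw [pow_succ, Module.End.mul_apply, Module.End.mul_apply]
    have : D.toLinearMap (c * h) = c * D h := by
      show D (c * h) = c * D h
      rw [D.leibniz, hc]; simp [smul_eq_mul]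
    rw [this]
    exact ih (D h)

private lemma aux_pow {k B : Type*} [Field k] [CharZero k] [CommRing B] [Algebra k B]
    (D : Derivation k B B) (r : B) (hr2 : D (D r) = 0) (j : ℕ) :
    ∀ (t : ℕ) (a : B), D a = 0 → j ≤ t →
      (D.toLinearMap ^ j) (a * r ^ t) =
        (t.descFactorial j) • (a * (D r) ^ j * r ^ (t - j)) := by
  induction j with
  | zero => intro t a ha _; simp
  | succ j ih =>
    intro t a ha hjt
    obtain ⟨t, rfl⟩ : ∃ t', t = t' + 1 := ⟨t - 1, by omega⟩
    rw [pow_succ, Module.End.mul_apply]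
    have h1 : D.toLinearMap (a * r ^ (t+1)) = (t+1) • ((a * D r) * r ^ t) := by
      show D (a * r ^ (t+1)) = (t+1) • ((a * D r) * r ^ t)
      rw [D.leibniz, D.leibniz_pow, ha]
      simp only [smul_eq_mul, smul_smul, Nat.add_sub_cancel, nsmul_eq_mul]
      ring
    have ha' : D (a * D r) = 0 := by
      rw [D.leibniz, hr2, ha]; simp
    rw [h1, map_nsmul, ih t (a * D r) ha' (by omega), smul_smul,
      Nat.succ_descFactorial_succ, show t + 1 - (j + 1) = t - j from by omega, pow_succ]
    congr 1
    ring

private lemma aux_main {k B : Type*} [Field k] [CharZero k] [CommRing B] [Algebra k B]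
    (D : Derivation k B B) (r : B) (hr2 : D (D r) = 0) (m : ℕ) :
    ∀ h : B, (D.toLinearMap ^ (m + 1)) h = 0 →
      (D r) ^ (degExpo m) * h ∈ Algebra.adjoin k ({b : B | D b = 0} ∪ {r}) := by
  set S := Algebra.adjoin k ({b : B | D b = 0} ∪ {r}) with hS
  have hker : ∀ b : B, D b = 0 → b ∈ S := fun b hb =>
    Algebra.subset_adjoin (Or.inl hb)
  have hrS : r ∈ S := Algebra.subset_adjoin (Or.inr rfl)
  have hfS : D r ∈ S := hker _ hr2
  induction m with
  | zero =>
    intro h hh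
    simp only [degExpo, pow_zero, one_mul]
    exact hker h (by simpa using hh)
  | succ m ih =>
    intro h hh
    set f := D r with hf
    set a := (D.toLinearMap ^ (m+1)) h with haa
    have ha : D a = 0 := by
      have h2 : (D.toLinearMap ^ (m+1+1)) h = 0 := hh
      rw [pow_succ', Module.End.mul_apply] at h2
      exact h2
    have hfpow : ∀ i : ℕ, D (f ^ i) = 0 := by
      intro i
      rw [D.leibniz_pow, hr2]; simp
    set c : B := ((Nat.factorial (m+1) : ℕ) : B) * f ^ (m+1) with hc
    have hcker : D c = 0 := by
      rw [D.leibniz, hfpow]; simp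
    set h₁ : B := c * h - a * r ^ (m+1) with hh₁def
    have hh₁ : (D.toLinearMap ^ (m+1)) h₁ = 0 := by
      rw [hh₁def, map_sub, aux_ker_mul D c hcker,
        aux_pow D r hr2 (m+1) (m+1) a ha le_rfl, Nat.descFactorial_self,
        Nat.sub_self, pow_zero, mul_one, nsmul_eq_mul, ← haa, hc]
      ring
    have hmem := ih h₁ hh₁
    have key : ((Nat.factorial (m+1) : ℕ) : B) * (f ^ (degExpo (m+1)) * h) =
        f ^ (degExpo m) * h₁ + (f ^ (degExpo m) * a) * r ^ (m+1) := by
      rw [hh₁def, hc]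
      have he : degExpo (m+1) = degExpo m + (m+1) := rfl
      rw [he, pow_add]
      ring
    have hmem2 : ((Nat.factorial (m+1) : ℕ) : B) * (f ^ (degExpo (m+1)) * h) ∈ S := by
      rw [key]
      exact add_mem hmem (mul_mem (mul_mem (pow_mem hfS _) (hker a ha)) (pow_mem hrS _))
    have hcast : ((Nat.factorial (m+1) : ℕ) : B) = algebraMap k B ((Nat.factorial (m+1) : ℕ) : k) := by
      simp
    have hne : ((Nat.factorial (m+1) : ℕ) : k) ≠ 0 := by
      exact_mod_cast Nat.factorial_ne_zero (m+1)
    have hdiv : f ^ (degExpo (m+1)) * h =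
        (((Nat.factorial (m+1) : ℕ) : k))⁻¹ • (((Nat.factorial (m+1) : ℕ) : B) * (f ^ (degExpo (m+1)) * h)) := by
      rw [hcast, ← Algebra.smul_def, smul_smul, inv_mul_cancel₀ hne, one_smul]
    rw [hdiv]
    exact S.smul_mem hmem2 _

/-- For the ascending chain `M 0 ⊆ M 1 ⊆ ⋯` of `A`-submodules of `F_n` defined by
`M i = { h ∈ B : f^i h ∈ M 0 }` with `G_n(r) ⊆ M 0 ⊆ F_n`, the following are equivalent:
(1) `fB ∩ M s = f M s` for some `s`; (2) `M s = M (s+1)` for some `s`; (3) the chain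
stabilizes; (4) `F_n = M s` for some `s`. Moreover, if `A` is noetherian these hold. -/
theorem degree_module_algorithm {k B : Type*} [Field k] [CharZero k] [CommRing B]
    [IsDomain B] [Algebra k B] (D : Derivation k B B)
    (hln : ∀ b : B, ∃ n : ℕ, (D.toLinearMap ^ n) b = 0)
    (A : Subalgebra k B) (hA : ∀ b : B, b ∈ A ↔ D b = 0)
    (r : B) (hr2 : D (D r) = 0) (hr1 : D r ≠ 0)
    (n : ℕ) (hn : 1 ≤ n)
    (M : ℕ → Submodule A B)
    (hGM : (Algebra.adjoin k ({b : B | D b = 0} ∪ {r}) : Set B) ∩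
        {x : B | (D.toLinearMap ^ (n + 1)) x = 0} ⊆ (M 0 : Set B))
    (hMF : ∀ x ∈ M 0, (D.toLinearMap ^ (n + 1)) x = 0)
    (hM : ∀ (i : ℕ) (h : B), h ∈ M i ↔ (D r) ^ i * h ∈ M 0) :
    ((∃ s : ℕ, {x : B | (∃ b : B, x = D r * b) ∧ x ∈ M s} =
        (fun m => D r * m) '' (M s : Set B)) ↔ (∃ s : ℕ, M s = M (s + 1))) ∧
    ((∃ s : ℕ, M s = M (s + 1)) ↔ (∃ s : ℕ, ∀ t : ℕ, s ≤ t → M t = M s)) ∧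
    ((∃ s : ℕ, ∀ t : ℕ, s ≤ t → M t = M s) ↔
        (∃ s : ℕ, (M s : Set B) = {x : B | (D.toLinearMap ^ (n + 1)) x = 0})) ∧
    (IsNoetherianRing A →
        ∃ s : ℕ, (M s : Set B) = {x : B | (D.toLinearMap ^ (n + 1)) x = 0}) := by
  have hfA : D r ∈ A := (hA (D r)).2 hr2
  have hfpow0 : ∀ i : ℕ, (D r) ^ i ≠ 0 := fun i => pow_ne_zero i hr1
  have hfker : ∀ i : ℕ, D ((D r) ^ i) = 0 := by
    intro i
    rw [D.leibniz_pow, hr2]; simp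
  have hcomm : ∀ (i : ℕ) (h : B),
      (D.toLinearMap ^ (n+1)) ((D r) ^ i * h) = (D r) ^ i * (D.toLinearMap ^ (n+1)) h :=
    fun i h => aux_ker_mul D _ (hfker i) _ h
  have hMF' : ∀ (i : ℕ) (x : B), x ∈ M i → (D.toLinearMap ^ (n+1)) x = 0 := by
    intro i x hx
    have h0 := hMF _ ((hM i x).1 hx)
    rw [hcomm] at h0
    rcases mul_eq_zero.1 h0 with h | h
    · exact absurd h (hfpow0 i)
    · exact h
  have hmul : ∀ (x : B), x ∈ M 0 → D r * x ∈ M 0 := by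
    intro x hx
    have := (M 0).smul_mem ⟨D r, hfA⟩ hx
    simpa [Algebra.smul_def] using this
  have hmono : ∀ i j, i ≤ j → ∀ x, x ∈ M i → x ∈ M j := by
    intro i j hij
    induction j, hij using Nat.le_induction with
    | base => exact fun x hx => hx
    | succ j hij ih =>
      intro x hx
      have h1 := (hM j x).1 (ih x hx)
      rw [hM]
      have h2 : (D r) ^ (j+1) * x = D r * ((D r) ^ j * x) := by rw [pow_succ]; ring
      rw [h2]
      exact hmul _ h1
  set s₀ := degExpo n with hs₀
  have hFM : ∀ x : B, (D.toLinearMap ^ (n+1)) x = 0 → x ∈ M s₀ := by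
    intro x hx
    rw [hM]
    apply hGM
    refine ⟨aux_main D r hr2 n x hx, ?_⟩
    show (D.toLinearMap ^ (n+1)) ((D r) ^ s₀ * x) = 0
    rw [hcomm, hx, mul_zero]
  have hkey : (M s₀ : Set B) = {x : B | (D.toLinearMap ^ (n + 1)) x = 0} :=
    Set.Subset.antisymm (fun x hx => hMF' _ x hx) (fun x hx => hFM x hx)
  have hstab : ∀ t : ℕ, s₀ ≤ t → M t = M s₀ := by
    intro t ht
    apply le_antisymm
    · intro x hx
      exact hFM x (hMF' t x hx)
    · intro x hx
      exact hmono s₀ t ht x hx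
  have st1 : {x : B | (∃ b : B, x = D r * b) ∧ x ∈ M s₀} =
      (fun m => D r * m) '' (M s₀ : Set B) := by
    ext x
    constructor
    · rintro ⟨⟨b, rfl⟩, hx⟩
      refine ⟨b, ?_, rfl⟩
      apply hFM
      have hx' := hMF' s₀ _ hx
      rw [aux_ker_mul D (D r) hr2] at hx'
      rcases mul_eq_zero.1 hx' with h | h
      · exact absurd h hr1
      · exact h
    · rintro ⟨m, hm, rfl⟩
      refine ⟨⟨m, rfl⟩, ?_⟩
      apply hFM
      rw [aux_ker_mul D (D r) hr2, hMF' s₀ m hm, mul_zero]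
  exact ⟨⟨fun _ => ⟨s₀, (hstab (s₀+1) (Nat.le_succ s₀)).symm⟩, fun _ => ⟨s₀, st1⟩⟩,
    ⟨fun _ => ⟨s₀, hstab⟩, fun _ => ⟨s₀, (hstab (s₀+1) (Nat.le_succ s₀)).symm⟩⟩,
    ⟨fun _ => ⟨s₀, hkey⟩, fun _ => ⟨s₀, hstab⟩⟩,
    fun _ => ⟨s₀, hkey⟩⟩
end

section
/- Let B be a commutative domain of characteristic zero, D ∈ LND(B) nonzero with kernel A, and suppose A is noetherian. If the plinth ideal pl(D) = A ∩ DB equals a_1 A + ⋯ + a_m A and r_1, …, r_m ∈ F_1 satisfy D r_i = a_i, then F_1 = A + A r_1 + ⋯ + A r_m. -/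
/-- Let `D` be a nonzero locally nilpotent derivation of a commutative domain `B` of
characteristic zero with noetherian kernel `A`. If the plinth ideal `A ∩ DB` equals
`a₁A + ⋯ + aₘA` and `r₁, …, rₘ ∈ F₁` satisfy `D rᵢ = aᵢ`, then
`F₁ = A + A r₁ + ⋯ + A rₘ`. -/
theorem first_degree_module_generators {k B : Type*} [Field k] [CharZero k] [CommRing B]
    [IsDomain B] [Algebra k B] (D : Derivation k B B)
    (hln : ∀ b : B, ∃ n : ℕ, (D.toLinearMap ^ n) b = 0) (hD : D ≠ 0)
    (A : Subalgebra k B) (hA : ∀ b : B, b ∈ A ↔ D b = 0)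
    (hnoeth : IsNoetherianRing A)
    (m : ℕ) (a r : Fin m → B) (ha : ∀ i, D (a i) = 0)
    (hpl : {x : B | D x = 0 ∧ ∃ b : B, D b = x} =
        {x : B | ∃ c : Fin m → B, (∀ i, D (c i) = 0) ∧ x = ∑ i, c i * a i})
    (hr : ∀ i, D (r i) = a i) :
    ∀ x : B, D (D x) = 0 ↔
      ∃ (a0 : B) (c : Fin m → B), D a0 = 0 ∧ (∀ i, D (c i) = 0) ∧
        x = a0 + ∑ i, c i * r i := by
  intro x
  constructor
  · intro hx
    have hmem : D x ∈ {x : B | D x = 0 ∧ ∃ b : B, D b = x} := ⟨hx, x, rfl⟩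
    rw [hpl] at hmem
    obtain ⟨c, hc, hcx⟩ := hmem
    refine ⟨x - ∑ i, c i * r i, c, ?_, hc, by ring⟩
    have hsum : D (∑ i, c i * r i) = ∑ i, c i * a i := by
      rw [map_sum]
      refine Finset.sum_congr rfl fun i _ => ?_
      rw [Derivation.leibniz, hc i, hr i, smul_eq_mul, smul_eq_mul]
      ring
    rw [map_sub, hsum, hcx, sub_self]
  · rintro ⟨a0, c, ha0, hc, rfl⟩
    have hsum : D (∑ i, c i * r i) = ∑ i, c i * a i := by
      rw [map_sum]
      refine Finset.sum_congr rfl fun i _ => ?_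
      rw [Derivation.leibniz, hc i, hr i, smul_eq_mul, smul_eq_mul]
      ring
    rw [map_add, ha0, zero_add, hsum, map_sum]
    simp [ha, hc]
end

section
/- Let B be a commutative domain of characteristic zero, D ∈ LND(B) with kernel A, and for i ≥ 0 let B_i = k[F_i] be the subalgebra of B generated by F_i = ker D^{i+1}. Then for each i ≥ 0, D restricts to a locally nilpotent derivation D_i of B_i with kernel A, and for i ≥ 1, frac(B_i) = frac(B). -/
set_option linter.unusedSectionVars false
section Aux

variable {k B : Type*} [Field k] [CharZero k] [CommRing B] [IsDomain B] [Algebra k B]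

/-- monotonicity of vanishing under powers of a linear map -/
private lemma pow_zero_of_le {f : B →ₗ[k] B} {m : ℕ} {x : B} (h : (f ^ m) x = 0)
    {n : ℕ} (hmn : m ≤ n) : (f ^ n) x = 0 := by
  obtain ⟨c, rfl⟩ := Nat.exists_eq_add_of_le hmn
  rw [add_comm, pow_add, Module.End.mul_apply, h, map_zero]

private lemma exists_local_slice (D : Derivation k B B) :
    ∀ (n : ℕ) (b : B), (D.toLinearMap ^ n) b = 0 → D b ≠ 0 →
      ∃ t : B, D t ≠ 0 ∧ D (D t) = 0 := by
  intro n
  induction n with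
  | zero =>
    intro b hb hDb
    simp only [pow_zero, Module.End.one_apply] at hb
    exact absurd (by rw [hb, map_zero]) hDb
  | succ n ih =>
    intro b hb hDb
    by_cases h : D (D b) = 0
    · exact ⟨b, hDb, h⟩
    · refine ih (D b) ?_ h
      rw [pow_succ, Module.End.mul_apply] at hb
      exact hb

private lemma key_identity (D : Derivation k B B) (s t : B) (hs : D s = 0) (hts : D t = s) :
    ∀ (m : ℕ) (b : B),
      (D.toLinearMap ^ m) (m • (s * b) - t * D b) = -(t * (D.toLinearMap ^ (m + 1)) b) := by
  intro m
  induction m with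
  | zero =>
    intro b
    simp [pow_zero, pow_one]
  | succ m ih =>
    intro b
    have step : D ((m + 1) • (s * b) - t * D b) = m • (s * D b) - t * D (D b) := by
      simp only [map_sub, map_nsmul, Derivation.leibniz, hs, hts, smul_eq_mul,
        nsmul_eq_mul, Derivation.map_natCast, mul_zero, zero_mul]
      push_cast
      ring
    have key : (D.toLinearMap ^ (m + 1)) ((m + 1) • (s * b) - t * D b)
        = (D.toLinearMap ^ m) (m • (s * D b) - t * D (D b)) := by
      rw [pow_succ, Module.End.mul_apply]
      exact congrArg _ step
    have last : (D.toLinearMap ^ (m + 1 + 1)) b = (D.toLinearMap ^ (m + 1)) (D b) := by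
      rw [pow_succ]; rfl
    rw [key, ih (D b), last]

end Aux

/-- For a nonzero locally nilpotent derivation `D` of a commutative domain `B` of
characteristic zero with kernel `A`, and `B_i = k[F_i]` the subalgebra generated by the
degree module `F_i = ker D^{i+1}`: `D` restricts to a locally nilpotent derivation of `B_i`
with kernel `A`, and for `i ≥ 1`, `frac(B_i) = frac(B)`. -/
theorem restriction_to_subring_generated_by_degree_module {k B : Type*} [Field k]
    [CharZero k] [CommRing B] [IsDomain B] [Algebra k B] (D : Derivation k B B)
    (hln : ∀ b : B, ∃ n : ℕ, (D.toLinearMap ^ n) b = 0) (hD : D ≠ 0)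
    (i : ℕ) (Bi : Subalgebra k B)
    (hBi : Bi = Algebra.adjoin k {x : B | (D.toLinearMap ^ (i + 1)) x = 0}) :
    (∀ x ∈ Bi, D x ∈ Bi) ∧
    (∀ x ∈ Bi, ∃ n : ℕ, (D.toLinearMap ^ n) x = 0) ∧
    ({x : B | x ∈ Bi ∧ D x = 0} = {x : B | D x = 0}) ∧
    (1 ≤ i → ∀ b : B, ∃ p ∈ Bi, ∃ q ∈ Bi, q ≠ 0 ∧ q * b = p) := by
  haveI : CharZero B := charZero_of_injective_algebraMap (algebraMap k B).injective
  subst hBi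
  set S : Set B := {x : B | (D.toLinearMap ^ (i + 1)) x = 0} with hS
  -- kernel elements are in the adjoin
  have hker : ∀ x : B, D x = 0 → x ∈ Algebra.adjoin k S := by
    intro x hx
    apply Algebra.subset_adjoin
    show (D.toLinearMap ^ (i + 1)) x = 0
    exact pow_zero_of_le (m := 1) (by simpa using hx) (Nat.le_add_left 1 i)
  refine ⟨?_, ?_, ?_, ?_⟩
  · -- D preserves the adjoin
    intro x hx
    induction hx using Algebra.adjoin_induction with
    | mem y hy =>
      apply Algebra.subset_adjoin
      show (D.toLinearMap ^ (i + 1)) (D y) = 0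
      have : (D.toLinearMap ^ (i + 2)) y = 0 := pow_zero_of_le hy (by omega)
      rw [pow_succ, Module.End.mul_apply] at this
      exact this
    | algebraMap r => rw [Derivation.map_algebraMap]; exact Subalgebra.zero_mem _
    | add x y hx hy ihx ihy => rw [map_add]; exact add_mem ihx ihy
    | mul x y hx hy ihx ihy =>
      rw [Derivation.leibniz, smul_eq_mul, smul_eq_mul]
      exact add_mem (mul_mem hx ihy) (mul_mem hy ihx)
  · intro x _; exact hln x
  · ext x
    simp only [Set.mem_setOf_eq, and_iff_right_iff_imp]
    intro hx
    exact hker x hx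
  · -- fraction field statement
    intro hi b
    -- get a local slice t with D t ≠ 0, D (D t) = 0
    obtain ⟨b0, hb0⟩ : ∃ b0 : B, D b0 ≠ 0 := by
      by_contra h
      push_neg at h
      exact hD (by ext x; simpa using h x)
    obtain ⟨n0, hn0⟩ := hln b0
    obtain ⟨t, ht, htt⟩ := exists_local_slice D n0 b0 hn0 hb0
    set s : B := D t with hsdef
    have hs : D s = 0 := htt
    have hsne : s ≠ 0 := ht
    have hsBi : s ∈ Algebra.adjoin k S := hker s hs
    have htBi : t ∈ Algebra.adjoin k S := by
      apply Algebra.subset_adjoin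
      show (D.toLinearMap ^ (i + 1)) t = 0
      refine pow_zero_of_le (m := 2) ?_ (by omega)
      show (D.toLinearMap ^ 2) t = 0
      rw [pow_two]
      exact htt
    -- main induction
    have main : ∀ (n : ℕ) (b : B), (D.toLinearMap ^ (n + 1)) b = 0 →
        ∃ q ∈ Algebra.adjoin k S, q ≠ 0 ∧ q * b ∈ Algebra.adjoin k S := by
      intro n
      induction n with
      | zero =>
        intro b hb
        refine ⟨1, Subalgebra.one_mem _, one_ne_zero, ?_⟩
        rw [one_mul]
        apply Algebra.subset_adjoin
        exact pow_zero_of_le (by simpa using hb) (Nat.le_add_left 1 i)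
      | succ n ih =>
        intro b hb
        set b1 : B := (n + 1) • (s * b) - t * D b with hb1def
        have hb1 : (D.toLinearMap ^ (n + 1)) b1 = 0 := by
          rw [hb1def, key_identity D s t hs rfl (n + 1) b, hb, mul_zero, neg_zero]
        have hDb : (D.toLinearMap ^ (n + 1)) (D b) = 0 := by
          rw [pow_succ, Module.End.mul_apply] at hb
          exact hb
        obtain ⟨q1, hq1m, hq1ne, hq1⟩ := ih b1 hb1
        obtain ⟨q2, hq2m, hq2ne, hq2⟩ := ih (D b) hDb
        refine ⟨q1 * q2 * ((n + 1) • s), ?_, ?_, ?_⟩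
        · exact mul_mem (mul_mem hq1m hq2m) (nsmul_mem hsBi _)
        · refine mul_ne_zero (mul_ne_zero hq1ne hq2ne) ?_
          rw [nsmul_eq_mul]
          exact mul_ne_zero (Nat.cast_ne_zero.mpr (Nat.succ_ne_zero n)) hsne
        · have expand : q1 * q2 * ((n + 1) • s) * b
              = q2 * (q1 * b1) + (q2 * D b) * q1 * t := by
            rw [hb1def]
            rw [nsmul_eq_mul, nsmul_eq_mul]
            ring
          rw [expand]
          exact add_mem (mul_mem hq2m hq1) (mul_mem (mul_mem hq2 hq1m) htBi)
    obtain ⟨n, hn⟩ := hln b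
    have hn' : (D.toLinearMap ^ (n + 1)) b = 0 := pow_zero_of_le hn (Nat.le_succ n)
    obtain ⟨q, hqm, hqne, hqb⟩ := main n b hn'
    exact ⟨q * b, hqb, q, hqm, hqne, rfl⟩
end

section
/- Let (B, I, f) be an affine triple (B an affine k-domain, I a nonzero ideal, 0 ≠ f ∈ I) and B' = B[f^{-1}I] the affine modification. Then B' is a principal ring extension of B (i.e., B' = B[r] for some r in frac(B)) if and only if there exist g ∈ B and n ≥ 0 such that B' = B[(f^n)^{-1} J] where J = f^n B + g B. -/
/-! Every element of `B[f⁻¹I]` lies in `B_f`, so a generator `r` of `B[f⁻¹I]` over `B` is a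
fraction `g / fⁿ`; conversely `B[(fⁿ)⁻¹(fⁿ, g)] = B[g / fⁿ]`. -/

/-- The affine modification `B[f⁻¹I]` of `B` along `f` with center `I`, realized as the
subalgebra of the fraction field of `B` generated by `B` and
`f⁻¹I = { x : f·x ∈ I }`. -/
noncomputable def affineModification (B : Type*) [CommRing B] [IsDomain B]
    (I : Ideal B) (f : B) : Subalgebra B (FractionRing B) :=
  Algebra.adjoin B
    {x : FractionRing B | algebraMap B (FractionRing B) f * x ∈ algebraMap B (FractionRing B) '' (I : Set B)}

section

variable {B : Type*} [CommRing B] [IsDomain B]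

local notation "φ" => algebraMap B (FractionRing B)

variable (B) in
/-- The localization `B_f`, realized inside `Frac B`. -/
noncomputable def awaySubalgebra (f : B) : Subalgebra B (FractionRing B) where
  carrier := {x | ∃ (n : ℕ) (g : B), x * φ (f ^ n) = φ g}
  mul_mem' := by
    rintro x y ⟨n, g, hx⟩ ⟨m, g', hy⟩
    refine ⟨n + m, g * g', ?_⟩
    rw [pow_add, map_mul, map_mul, ← hx, ← hy]
    ring
  add_mem' := by
    rintro x y ⟨n, g, hx⟩ ⟨m, g', hy⟩
    refine ⟨n + m, g * f ^ m + g' * f ^ n, ?_⟩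
    rw [map_add, map_mul, map_mul, ← hx, ← hy, pow_add, map_mul]
    ring
  one_mem' := ⟨0, 1, by simp⟩
  algebraMap_mem' b := ⟨0, b, by simp⟩

theorem exists_eq_div_pow_of_mem_awaySubalgebra {f : B} (hf : f ≠ 0) {x : FractionRing B}
    (hx : x ∈ awaySubalgebra B f) : ∃ (g : B) (n : ℕ), x = φ g / φ f ^ n := by
  obtain ⟨n, g, hxg⟩ := hx
  have hfn : φ f ^ n ≠ 0 :=
    pow_ne_zero n ((map_ne_zero_iff _ (IsFractionRing.injective B _)).mpr hf)
  exact ⟨g, n, by rw [eq_div_iff hfn, ← map_pow, hxg]⟩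

theorem affineModification_le_awaySubalgebra (I : Ideal B) (f : B) :
    affineModification B I f ≤ awaySubalgebra B f :=
  Algebra.adjoin_le fun _ ⟨c, _, hc⟩ => ⟨1, c, by rw [pow_one, mul_comm, hc]⟩

theorem affineModification_span_pair {f : B} (hf : f ≠ 0) (g : B) :
    affineModification B (Ideal.span {f, g}) f = Algebra.adjoin B {φ g / φ f} := by
  have hf' : φ f ≠ 0 := (map_ne_zero_iff _ (IsFractionRing.injective B _)).mpr hf
  apply le_antisymm
  · refine Algebra.adjoin_le ?_
    rintro x ⟨c, hc, hcx⟩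
    obtain ⟨a, b, rfl⟩ := Ideal.mem_span_pair.mp hc
    have hx : x = φ a + φ b * (φ g / φ f) := by
      apply mul_left_cancel₀ hf'
      rw [← hcx]
      field_simp
      simp only [map_add, map_mul]
      ring
    rw [hx]
    exact add_mem (Subalgebra.algebraMap_mem _ a)
      (mul_mem (Subalgebra.algebraMap_mem _ b) (Algebra.self_mem_adjoin_singleton B _))
  · refine Algebra.adjoin_le (Set.singleton_subset_iff.mpr (Algebra.subset_adjoin ?_))
    exact ⟨g, Ideal.subset_span (by simp), by field_simp⟩

end

theorem principal_affine_modification_general {B : Type*} [CommRing B]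
    [IsDomain B]
    (I : Ideal B) (f : B) (hf : f ≠ 0) :
    (∃ r : FractionRing B, affineModification B I f = Algebra.adjoin B {r}) ↔
    (∃ (g : B) (n : ℕ),
      affineModification B I f = affineModification B (Ideal.span {f ^ n, g}) (f ^ n)) := by
  have hfn (n : ℕ) : f ^ n ≠ 0 := pow_ne_zero n hf
  constructor
  · rintro ⟨r, hr⟩
    have hr_mem : r ∈ awaySubalgebra B f := affineModification_le_awaySubalgebra I f <| by
      rw [hr]
      exact Algebra.self_mem_adjoin_singleton B r
    obtain ⟨g, n, rfl⟩ := exists_eq_div_pow_of_mem_awaySubalgebra hf hr_mem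
    exact ⟨g, n, by rw [hr, affineModification_span_pair (hfn n), map_pow]⟩
  · rintro ⟨g, n, h⟩
    exact ⟨_, h.trans (affineModification_span_pair (hfn n) g)⟩

/-- Let `(B, I, f)` be an affine triple over a field `k` of characteristic zero and
`B' = B[f⁻¹I]` the affine modification. Then `B'` is a principal ring extension of `B`
(i.e. `B' = B[r]` for some `r ∈ frac(B)`) if and only if there exist `g ∈ B` and `n ≥ 0`
such that `B' = B[(fⁿ)⁻¹J]` where `J = fⁿB + gB`. -/
theorem principal_affine_modification {k B : Type*} [Field k] [CharZero k] [CommRing B]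
    [IsDomain B] [Algebra k B] [Algebra.FiniteType k B]
    (I : Ideal B) (hI : I ≠ ⊥) (f : B) (hfI : f ∈ I) (hf : f ≠ 0) :
    (∃ r : FractionRing B, affineModification B I f = Algebra.adjoin B {r}) ↔
    (∃ (g : B) (n : ℕ),
      affineModification B I f = affineModification B (Ideal.span {f ^ n, g}) (f ^ n)) :=
  principal_affine_modification_general I f hf
end

section
/- Let B be a commutative domain of characteristic zero, D ∈ LND(B), f ∈ ker D nonzero, and I ⊆ B a nonzero ideal with DI ⊆ I. Then the extension of D to B_f restricts to a locally nilpotent derivation of the affine modification B[f^{-1}I]. -/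
/-- Iterated Leibniz nilpotency: if `d^m a = 0` and `d^l b = 0` then `d^(m+l) (a*b) = 0`. -/
lemma aux_nilmul {R A : Type*} [CommRing R] [CommRing A] [Algebra R A]
    (d : Derivation R A A) :
    ∀ (N m l : ℕ) (a b : A), m + l ≤ N → (d.toLinearMap ^ m) a = 0 →
      (d.toLinearMap ^ l) b = 0 → (d.toLinearMap ^ (m + l)) (a * b) = 0 := by
  intro N
  induction N with
  | zero =>
    intro m l a b hN ha hb
    obtain ⟨hm, hl⟩ : m = 0 ∧ l = 0 := by omega
    subst hm; subst hl
    simp only [pow_zero, Module.End.one_apply] at ha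
    rw [ha, zero_mul, map_zero]
  | succ N ih =>
    intro m l a b hN ha hb
    match m, l with
    | 0, l =>
      simp only [pow_zero, Module.End.one_apply] at ha
      rw [ha, zero_mul, map_zero]
    | m, 0 =>
      simp only [pow_zero, Module.End.one_apply] at hb
      rw [hb, mul_zero, map_zero]
    | m + 1, l + 1 =>
      have key : (m + 1) + (l + 1) = ((m + 1) + l) + 1 := by omega
      rw [key, pow_succ, Module.End.mul_apply]
      have hd : d.toLinearMap (a * b) = a * d b + (d a) * b := by
        show d (a * b) = _
        rw [d.leibniz]; simp only [smul_eq_mul]; ring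
      rw [hd, map_add]
      have h1 : (d.toLinearMap ^ ((m + 1) + l)) (a * d b) = 0 := by
        apply ih (m + 1) l a (d b) (by omega) ha
        have hb' := hb
        rwa [pow_succ, Module.End.mul_apply] at hb'
      have h2 : (d.toLinearMap ^ (m + (l + 1))) ((d a) * b) = 0 := by
        apply ih m (l + 1) (d a) b (by omega) _ hb
        have ha' := ha
        rwa [pow_succ, Module.End.mul_apply] at ha'
      rw [h1]
      rw [show (m + 1) + l = m + (l + 1) by omega, h2, add_zero]

lemma aux_nil_stable {R A : Type*} [CommRing R] [CommRing A] [Algebra R A]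
    (d : Derivation R A A) (m n : ℕ) (a : A) (h : (d.toLinearMap ^ m) a = 0)
    (hmn : m ≤ n) : (d.toLinearMap ^ n) a = 0 := by
  obtain ⟨j, rfl⟩ := Nat.exists_eq_add_of_le hmn
  rw [add_comm, pow_add, Module.End.mul_apply, h, map_zero]

/-- Let `D` be a locally nilpotent derivation of a commutative domain `B` of characteristic
zero, `f ∈ ker D` nonzero, and `I ⊆ B` a nonzero integral ideal for `D` (`DI ⊆ I`). Then
the extension of `D` to the localization `B_f` restricts to a locally nilpotent derivation
of the affine modification `B[f⁻¹I]`. -/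
theorem equivariant_affine_modification {k B : Type*} [Field k] [CharZero k] [CommRing B]
    [IsDomain B] [Algebra k B]
    (D : Derivation k B B)
    (hln : ∀ b : B, ∃ n : ℕ, (D.toLinearMap ^ n) b = 0)
    (f : B) (hf : D f = 0) (hf0 : f ≠ 0)
    (I : Ideal B) (hI : I ≠ ⊥) (hDI : ∀ x ∈ I, D x ∈ I)
    (D' : Derivation k (FractionRing B) (FractionRing B))
    (hD' : ∀ b : B, D' (algebraMap B (FractionRing B) b) = algebraMap B (FractionRing B) (D b)) :
    (∀ x ∈ affineModification B I f, D' x ∈ affineModification B I f) ∧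
    (∀ x ∈ affineModification B I f, ∃ n : ℕ, (D'.toLinearMap ^ n) x = 0) := by
  set K := FractionRing B
  set φ := algebraMap B K with hφ
  have hφinj : Function.Injective φ := IsFractionRing.injective B K
  have hφf : φ f ≠ 0 := fun h => hf0 (hφinj (by rw [h, map_zero]))
  have hD'f : D' (φ f) = 0 := by rw [hD', hf, map_zero]
  set S : Set K := {x : K | φ f * x ∈ φ '' (I : Set B)} with hS
  have hgen : ∀ x ∈ S, D' x ∈ S := by
    intro x hx
    obtain ⟨i, hiI, hix⟩ := hx
    have h1 : D' (φ f * x) = φ f * D' x := by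
      rw [D'.leibniz, hD'f, smul_eq_mul, smul_eq_mul, mul_zero, add_zero]
    have h2 : φ f * D' x = φ (D i) := by
      rw [← h1, ← hix, hD']
    exact ⟨D i, hDI i hiI, h2.symm⟩
  constructor
  · intro x hx
    unfold affineModification at hx ⊢
    refine Algebra.adjoin_induction (p := fun y _ => D' y ∈ Algebra.adjoin B S)
      ?_ ?_ ?_ ?_ hx
    · intro y hy
      exact Algebra.subset_adjoin (hgen y hy)
    · intro b
      rw [hD']
      exact Subalgebra.algebraMap_mem _ _
    · intro y z _ _ hy hz
      rw [map_add]; exact add_mem hy hz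
    · intro y z hy' hz' hy hz
      rw [D'.leibniz, smul_eq_mul, smul_eq_mul]
      exact add_mem (mul_mem hy' hz) (mul_mem hz' hy)
  · have hiter : ∀ (n : ℕ) (b : B), (D'.toLinearMap ^ n) (φ b) = φ ((D.toLinearMap ^ n) b) := by
      intro n
      induction n with
      | zero => intro b; simp
      | succ n ih =>
        intro b
        rw [pow_succ, Module.End.mul_apply, pow_succ, Module.End.mul_apply]
        rw [show (D'.toLinearMap) (φ b) = φ (D b) from hD' b]
        exact ih (D b)
    intro x hx
    unfold affineModification at hx
    refine Algebra.adjoin_induction (p := fun y _ => ∃ n : ℕ, (D'.toLinearMap ^ n) y = 0)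
      ?_ ?_ ?_ ?_ hx
    · intro y hy
      obtain ⟨i, hiI, hix⟩ := hy
      have key : ∀ n : ℕ, φ f * (D'.toLinearMap ^ n) y = φ ((D.toLinearMap ^ n) i) := by
        intro n
        induction n with
        | zero => simpa using hix.symm
        | succ n ih =>
          have step : D' (φ f * (D'.toLinearMap ^ n) y)
              = φ f * (D'.toLinearMap ^ (n + 1)) y := by
            rw [D'.leibniz, hD'f, smul_eq_mul, smul_eq_mul, mul_zero, add_zero,
              pow_succ', Module.End.mul_apply]
            rfl
          rw [← step, ih, hD']
          exact congrArg φ (by rw [pow_succ', Module.End.mul_apply]; rfl)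
      obtain ⟨n, hn⟩ := hln i
      refine ⟨n, ?_⟩
      have hkn := key n
      rw [hn, map_zero] at hkn
      exact (mul_eq_zero.mp hkn).resolve_left hφf
    · intro b
      obtain ⟨n, hn⟩ := hln b
      exact ⟨n, by rw [hiter n b, hn, map_zero]⟩
    · intro y z _ _ hy hz
      obtain ⟨m, hm⟩ := hy
      obtain ⟨l, hl⟩ := hz
      refine ⟨max m l, ?_⟩
      rw [map_add, aux_nil_stable D' m _ y hm (le_max_left m l),
        aux_nil_stable D' l _ z hl (le_max_right m l), add_zero]
    · intro y z _ _ hy hz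
      obtain ⟨m, hm⟩ := hy
      obtain ⟨l, hl⟩ := hz
      exact ⟨m + l, aux_nilmul D' (m + l) m l y z le_rfl hm hl⟩
end

section
/- Let B = k[x,y,z] be the polynomial ring in three variables over a field k of characteristic zero, Q = xz + y², P = y + Q², and D the locally nilpotent derivation D = 2xQ ∂_y − (1 + 4yQ) ∂_z. Then B = ⊕_{(i,j)} A Q^i z^j, the direct sum over pairs (i,j) with 0 ≤ i ≤ 3 and j ≥ 0, where A = k[x, P] = ker D; in particular B is a free A-module with basis { Q^i z^j : 0 ≤ i ≤ 3, j ≥ 0 }. -/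
open MvPolynomial Polynomial

set_option linter.unusedSectionVars false
set_option synthInstance.maxHeartbeats 1000000
set_option maxHeartbeats 1600000

noncomputable section FBE3

variable (k : Type*) [Field k] [CharZero k]

private def B3 := MvPolynomial (Fin 3) k
private def FF := FractionRing (MvPolynomial (Fin 2) k)

-- work directly with MvPolynomial (Fin 3) k
private def xP : MvPolynomial (Fin 3) k := X 0
private def yP : MvPolynomial (Fin 3) k := X 1
private def zP : MvPolynomial (Fin 3) k := X 2
private def QP : MvPolynomial (Fin 3) k := xP k * zP k + yP k ^ 2
private def PP : MvPolynomial (Fin 3) k := yP k + QP k ^ 2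

private def tF : FractionRing (MvPolynomial (Fin 2) k) := algebraMap (MvPolynomial (Fin 2) k) _ (X 0)
private def pF : FractionRing (MvPolynomial (Fin 2) k) := algebraMap (MvPolynomial (Fin 2) k) _ (X 1)

private def Phi : MvPolynomial (Fin 3) k →ₐ[k] Polynomial (FractionRing (MvPolynomial (Fin 2) k)) :=
  aeval ![Polynomial.C (tF k), Polynomial.C (pF k) - Polynomial.X ^ 2,
    Polynomial.C (tF k)⁻¹ * (Polynomial.X - (Polynomial.C (pF k) - Polynomial.X ^ 2) ^ 2)]

private lemma htne : tF k ≠ 0 := by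
  have h := IsFractionRing.injective (MvPolynomial (Fin 2) k) (FractionRing (MvPolynomial (Fin 2) k))
  simp only [tF, Ne, ← map_zero (algebraMap (MvPolynomial (Fin 2) k) (FractionRing (MvPolynomial (Fin 2) k))), h.eq_iff]
  exact X_ne_zero 0

private lemma hPhix : Phi k (xP k) = Polynomial.C (tF k) := by
  simp [Phi, xP]

private lemma hPhiy : Phi k (yP k) = Polynomial.C (pF k) - Polynomial.X ^ 2 := by
  simp [Phi, yP]

private lemma hPhiz : Phi k (zP k) =
    Polynomial.C (tF k)⁻¹ * (Polynomial.X - (Polynomial.C (pF k) - Polynomial.X ^ 2) ^ 2) := by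
  simp [Phi, zP]

private lemma hCt : (Polynomial.C (tF k)) * Polynomial.C (tF k)⁻¹ = 1 := by
  rw [← Polynomial.C_mul, mul_inv_cancel₀ (htne k), Polynomial.C_1]

private lemma hPhiQ : Phi k (QP k) = Polynomial.X := by
  have h := hCt k
  simp only [QP, map_add, map_mul, map_pow, hPhix, hPhiy, hPhiz]
  linear_combination (Polynomial.X - (Polynomial.C (pF k) - Polynomial.X ^ 2) ^ 2) * h

private lemma hPhiP : Phi k (PP k) = Polynomial.C (pF k) := by
  simp only [PP, map_add, map_pow, hPhiy, hPhiQ]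
  ring

private lemma range_two : ({xP k, PP k} : Set (MvPolynomial (Fin 3) k)) = Set.range ![xP k, PP k] := by
  ext u
  simp [Fin.exists_fin_two, eq_comm]
  tauto

private lemma Phi_aeval (f : MvPolynomial (Fin 2) k) :
    Phi k (aeval ![xP k, PP k] f) =
      Polynomial.C (algebraMap (MvPolynomial (Fin 2) k) (FractionRing (MvPolynomial (Fin 2) k)) f) := by
  induction f using MvPolynomial.induction_on with
  | C a =>
      rw [MvPolynomial.aeval_C]
      rw [AlgHom.commutes]
      rw [show (algebraMap (MvPolynomial (Fin 2) k) (FractionRing (MvPolynomial (Fin 2) k))) (MvPolynomial.C a)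
            = algebraMap k (FractionRing (MvPolynomial (Fin 2) k)) a from
          (IsScalarTower.algebraMap_apply k (MvPolynomial (Fin 2) k) (FractionRing (MvPolynomial (Fin 2) k)) a).symm]
      rw [IsScalarTower.algebraMap_apply k (FractionRing (MvPolynomial (Fin 2) k)) (Polynomial (FractionRing (MvPolynomial (Fin 2) k))) a]
      rfl
  | add p q hp hq => rw [map_add, map_add, hp, hq, RingHom.map_add, Polynomial.C_add]
  | mul_X p i hp =>
      rw [map_mul, map_mul, map_mul, hp, MvPolynomial.aeval_X, Polynomial.C_mul]
      congr 1
      fin_cases i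
      · simpa [tF] using hPhix k
      · simpa [pF] using hPhiP k

private lemma Phi_A_rep {a : MvPolynomial (Fin 3) k} (ha : a ∈ Algebra.adjoin k {xP k, PP k}) :
    ∃ f : MvPolynomial (Fin 2) k, a = aeval ![xP k, PP k] f := by
  rw [range_two, Algebra.adjoin_range_eq_range_aeval] at ha
  obtain ⟨f, hf⟩ := ha
  exact ⟨f, hf.symm⟩

private lemma Phi_A_eq_C {a : MvPolynomial (Fin 3) k} (ha : a ∈ Algebra.adjoin k {xP k, PP k}) :
    Phi k a = Polynomial.C ((Phi k a).coeff 0) := by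
  obtain ⟨f, rfl⟩ := Phi_A_rep k ha
  rw [Phi_aeval]
  simp

private lemma Phi_A_inj {a : MvPolynomial (Fin 3) k} (ha : a ∈ Algebra.adjoin k {xP k, PP k})
    (h : Phi k a = 0) : a = 0 := by
  obtain ⟨f, rfl⟩ := Phi_A_rep k ha
  rw [Phi_aeval] at h
  have h2 : algebraMap (MvPolynomial (Fin 2) k) (FractionRing (MvPolynomial (Fin 2) k)) f = 0 := by
    simpa using (Polynomial.C_eq_zero).mp h
  have h3 : f = 0 := IsFractionRing.injective (MvPolynomial (Fin 2) k)
    (FractionRing (MvPolynomial (Fin 2) k)) (by simpa using h2)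
  rw [h3, map_zero]

private def wQ (p : Fin 4 × ℕ) : Polynomial (FractionRing (MvPolynomial (Fin 2) k)) :=
  Polynomial.X ^ (p.1 : ℕ) *
    (Polynomial.C (tF k)⁻¹ * (Polynomial.X - (Polynomial.C (pF k) - Polynomial.X ^ 2) ^ 2)) ^ p.2

private lemma Phi_v (p : Fin 4 × ℕ) : Phi k (QP k ^ (p.1 : ℕ) * zP k ^ p.2) = wQ k p := by
  rw [map_mul, map_pow, map_pow, hPhiQ, hPhiz, wQ]

private lemma hg_deg : ((Polynomial.C (pF k) - Polynomial.X ^ 2 :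
    Polynomial (FractionRing (MvPolynomial (Fin 2) k)))).natDegree = 2 := by
  rw [show (Polynomial.C (pF k) - Polynomial.X ^ 2 :
      Polynomial (FractionRing (MvPolynomial (Fin 2) k))) = -(Polynomial.X ^ 2 - Polynomial.C (pF k)) by ring,
    Polynomial.natDegree_neg, Polynomial.natDegree_X_pow_sub_C]

private lemma hz_deg : ((Polynomial.C (tF k)⁻¹ * (Polynomial.X - (Polynomial.C (pF k) - Polynomial.X ^ 2) ^ 2) :
    Polynomial (FractionRing (MvPolynomial (Fin 2) k)))).natDegree = 4 := by
  have h1 : ((Polynomial.C (pF k) - Polynomial.X ^ 2) ^ 2 :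
      Polynomial (FractionRing (MvPolynomial (Fin 2) k))).natDegree = 4 := by
    rw [Polynomial.natDegree_pow, hg_deg]
  have h2 : ((Polynomial.X - (Polynomial.C (pF k) - Polynomial.X ^ 2) ^ 2 :
      Polynomial (FractionRing (MvPolynomial (Fin 2) k)))).natDegree = 4 := by
    rw [Polynomial.natDegree_sub_eq_right_of_natDegree_lt, h1]
    rw [h1, Polynomial.natDegree_X]; norm_num
  rw [Polynomial.natDegree_C_mul (inv_ne_zero (htne k)), h2]

private lemma hz_ne : ((Polynomial.C (tF k)⁻¹ * (Polynomial.X - (Polynomial.C (pF k) - Polynomial.X ^ 2) ^ 2) :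
    Polynomial (FractionRing (MvPolynomial (Fin 2) k)))) ≠ 0 := by
  intro h0
  have := hz_deg k
  rw [h0] at this
  simp at this

private lemma wQ_ne (p : Fin 4 × ℕ) : wQ k p ≠ 0 :=
  mul_ne_zero (pow_ne_zero _ Polynomial.X_ne_zero) (pow_ne_zero _ (hz_ne k))

private lemma wQ_deg (p : Fin 4 × ℕ) : (wQ k p).natDegree = (p.1 : ℕ) + 4 * p.2 := by
  rw [wQ, Polynomial.natDegree_mul (pow_ne_zero _ Polynomial.X_ne_zero) (pow_ne_zero _ (hz_ne k)),
    Polynomial.natDegree_pow, Polynomial.natDegree_pow, Polynomial.natDegree_X, hz_deg]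
  ring

private lemma wQ_deg_inj {p q : Fin 4 × ℕ} (h : (wQ k p).natDegree = (wQ k q).natDegree) : p = q := by
  rw [wQ_deg, wQ_deg] at h
  have hp := p.1.isLt
  have hq := q.1.isLt
  have : (p.1 : ℕ) = q.1 ∧ p.2 = q.2 := by omega
  exact Prod.ext (Fin.ext this.1) this.2

private lemma distinct_deg {F : Type*} [Field F] {ι : Type*} [DecidableEq ι] (s : Finset ι)
    (γ : ι → F) (w : ι → Polynomial F) (hw : ∀ i ∈ s, w i ≠ 0)
    (hd : ∀ i ∈ s, ∀ j ∈ s, (w i).natDegree = (w j).natDegree → i = j)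
    (h : ∑ i ∈ s, Polynomial.C (γ i) * w i = 0) : ∀ i ∈ s, γ i = 0 := by
  by_contra hc
  push_neg at hc
  obtain ⟨i0, hi0s, hi0⟩ := hc
  classical
  set s' := s.filter (fun i => γ i ≠ 0) with hs'def
  have hs' : s'.Nonempty := ⟨i0, by simp [hs'def, hi0s, hi0]⟩
  obtain ⟨m, hm, hmax⟩ := s'.exists_max_image (fun i => (w i).natDegree) hs'
  have hms : m ∈ s := (Finset.mem_filter.mp hm).1
  have hmne : γ m ≠ 0 := (Finset.mem_filter.mp hm).2
  have hco : ∑ i ∈ s, (Polynomial.C (γ i) * w i).coeff ((w m).natDegree) = 0 := by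
    rw [← Polynomial.finset_sum_coeff, h, Polynomial.coeff_zero]
  rw [Finset.sum_eq_single m] at hco
  · rw [Polynomial.coeff_C_mul] at hco
    exact hmne (by
      have hlc : (w m).coeff ((w m).natDegree) ≠ 0 := by
        rw [← Polynomial.leadingCoeff]
        exact Polynomial.leadingCoeff_ne_zero.mpr (hw m hms)
      exact (mul_eq_zero.mp hco).resolve_right hlc)
  · intro j hjs hjm
    by_cases hγj : γ j = 0
    · rw [hγj, Polynomial.C_0, zero_mul, Polynomial.coeff_zero]
    · have hj' : j ∈ s' := Finset.mem_filter.mpr ⟨hjs, hγj⟩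
      have hle : (w j).natDegree ≤ (w m).natDegree := hmax j hj'
      have hne : (w j).natDegree ≠ (w m).natDegree := fun hh => hjm (hd j hjs m hms hh)
      apply Polynomial.coeff_eq_zero_of_natDegree_lt
      exact lt_of_le_of_lt (Polynomial.natDegree_C_mul_le _ _) (lt_of_le_of_ne hle hne)
  · intro h'; exact absurd hms h'

private def Dder : Derivation k (MvPolynomial (Fin 3) k) (MvPolynomial (Fin 3) k) :=
  (2 * xP k * QP k) • pderiv 1 - (1 + 4 * yP k * QP k) • pderiv 2

private lemma Dapp (b : MvPolynomial (Fin 3) k) :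
    Dder k b = 2 * xP k * QP k * pderiv 1 b - (1 + 4 * yP k * QP k) * pderiv 2 b := by
  rw [Dder, Derivation.sub_apply, Derivation.smul_apply, Derivation.smul_apply,
    smul_eq_mul, smul_eq_mul]

private lemma D_x : Dder k (xP k) = 0 := by
  rw [Dapp, xP]
  simp [pderiv_X_of_ne]

private lemma D_y : Dder k (yP k) = 2 * xP k * QP k := by
  rw [Dapp, yP]
  simp [pderiv_X_self, pderiv_X_of_ne]

private lemma D_z : Dder k (zP k) = -(1 + 4 * yP k * QP k) := by
  rw [Dapp, zP]
  simp [pderiv_X_self, pderiv_X_of_ne]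

private lemma D_Q : Dder k (QP k) = -(xP k) := by
  have hx := D_x k; have hy := D_y k; have hz := D_z k
  rw [show QP k = xP k * zP k + yP k ^ 2 from rfl]
  rw [map_add, Derivation.leibniz, Derivation.leibniz_pow, hx, hy, hz]
  simp only [smul_eq_mul, smul_smul]
  ring

private lemma D_P : Dder k (PP k) = 0 := by
  rw [show PP k = yP k + QP k ^ 2 from rfl, map_add, Derivation.leibniz_pow, D_y k, D_Q k]
  simp only [smul_eq_mul]
  ring

private lemma key_X (i : Fin 3) :
    Phi k (Dder k (X i)) = -Polynomial.C (tF k) * Polynomial.derivative (Phi k (X i)) := by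
  fin_cases i
  · show Phi k (Dder k (xP k)) = -Polynomial.C (tF k) * Polynomial.derivative (Phi k (xP k))
    rw [D_x, map_zero, hPhix]
    simp
  · show Phi k (Dder k (yP k)) = -Polynomial.C (tF k) * Polynomial.derivative (Phi k (yP k))
    rw [D_y, map_mul, map_mul, map_ofNat, hPhix, hPhiQ, hPhiy]
    simp only [Polynomial.derivative_sub, Polynomial.derivative_C, Polynomial.derivative_pow,
      Polynomial.derivative_X, Polynomial.derivative_one, Polynomial.C_eq_natCast, Nat.cast_ofNat, map_ofNat]
    ring
  · show Phi k (Dder k (zP k)) = -Polynomial.C (tF k) * Polynomial.derivative (Phi k (zP k))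
    rw [D_z, map_neg, map_add, map_one, map_mul, map_mul, map_ofNat, hPhiy, hPhiQ, hPhiz]
    simp only [Polynomial.derivative_mul, Polynomial.derivative_sub, Polynomial.derivative_C,
      Polynomial.derivative_pow, Polynomial.derivative_X, Polynomial.derivative_one, Polynomial.C_eq_natCast, Nat.cast_ofNat, map_ofNat]
    linear_combination (1 + 4 * (Polynomial.C (pF k) - Polynomial.X ^ 2) * Polynomial.X) * hCt k

private lemma Phi_D (b : MvPolynomial (Fin 3) k) :
    Phi k (Dder k b) = -Polynomial.C (tF k) * Polynomial.derivative (Phi k b) := by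
  induction b using MvPolynomial.induction_on with
  | C a =>
      rw [show (MvPolynomial.C a : MvPolynomial (Fin 3) k) = algebraMap k _ a from rfl,
        Derivation.map_algebraMap, map_zero, AlgHom.commutes,
        IsScalarTower.algebraMap_apply k (FractionRing (MvPolynomial (Fin 2) k)) _ a]
      rw [show algebraMap (FractionRing (MvPolynomial (Fin 2) k))
          (Polynomial (FractionRing (MvPolynomial (Fin 2) k))) = Polynomial.C from rfl]
      rw [Polynomial.derivative_C, mul_zero]
  | add p q hp hq =>
      rw [map_add, map_add, hp, hq, map_add, Polynomial.derivative_add]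
      ring
  | mul_X p i hp =>
      rw [Derivation.leibniz, smul_eq_mul, smul_eq_mul, map_add, map_mul, map_mul,
        map_mul, Polynomial.derivative_mul, hp, key_X]
      ring

private lemma hkey : QP k ^ 4 = 2 * PP k * QP k ^ 2 + QP k - PP k ^ 2 - xP k * zP k := by
  simp only [QP, PP]
  ring

private lemma smul_def' (a : ↥(Algebra.adjoin k {xP k, PP k})) (b : MvPolynomial (Fin 3) k) :
    a • b = (a : MvPolynomial (Fin 3) k) * b := rfl

private lemma hxA : xP k ∈ Algebra.adjoin k {xP k, PP k} :=
  Algebra.subset_adjoin (Set.mem_insert _ _)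

private lemma hPA : PP k ∈ Algebra.adjoin k {xP k, PP k} :=
  Algebra.subset_adjoin (Set.mem_insert_of_mem _ rfl)

private def SpanS : Submodule (↥(Algebra.adjoin k {xP k, PP k})) (MvPolynomial (Fin 3) k) :=
  Submodule.span _ (Set.range fun p : Fin 4 × ℕ => QP k ^ (p.1 : ℕ) * zP k ^ p.2)

private lemma mem_span_pow : ∀ i j : ℕ, QP k ^ i * zP k ^ j ∈ SpanS k := by
  intro i
  induction i using Nat.strong_induction_on with
  | _ i ih =>
    intro j
    by_cases hi : i ≤ 3
    · exact Submodule.subset_span ⟨(⟨i, by omega⟩, j), rfl⟩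
    · obtain ⟨i', rfl⟩ : ∃ i', i = i' + 4 := ⟨i - 4, by omega⟩
      have heq : QP k ^ (i' + 4) * zP k ^ j =
          (⟨2 * PP k, by exact Subalgebra.mul_mem _ (ofNat_mem _ 2) (hPA k)⟩ :
            ↥(Algebra.adjoin k {xP k, PP k})) • (QP k ^ (i' + 2) * zP k ^ j) +
          (QP k ^ (i' + 1) * zP k ^ j) -
          (⟨PP k ^ 2, pow_mem (hPA k) 2⟩ : ↥(Algebra.adjoin k {xP k, PP k})) •
            (QP k ^ i' * zP k ^ j) -
          (⟨xP k, hxA k⟩ : ↥(Algebra.adjoin k {xP k, PP k})) • (QP k ^ i' * zP k ^ (j + 1)) := by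
        simp only [smul_def']
        linear_combination QP k ^ i' * zP k ^ j * hkey k
      rw [heq]
      exact sub_mem (sub_mem (add_mem (Submodule.smul_mem _ _ (ih (i' + 2) (by omega) j))
        (ih (i' + 1) (by omega) j)) (Submodule.smul_mem _ _ (ih i' (by omega) j)))
        (Submodule.smul_mem _ _ (ih i' (by omega) (j + 1)))

private lemma SpanS_mul_mem : ∀ a ∈ SpanS k, ∀ b ∈ SpanS k, a * b ∈ SpanS k := by
  intro a ha
  induction ha using Submodule.span_induction with
  | mem u hu =>
      obtain ⟨p, rfl⟩ := hu
      intro b hb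
      induction hb using Submodule.span_induction with
      | mem v hv =>
          obtain ⟨q, rfl⟩ := hv
          have : QP k ^ (p.1 : ℕ) * zP k ^ p.2 * (QP k ^ (q.1 : ℕ) * zP k ^ q.2) =
              QP k ^ ((p.1 : ℕ) + (q.1 : ℕ)) * zP k ^ (p.2 + q.2) := by ring
          rw [this]
          exact mem_span_pow k _ _
      | zero => rw [mul_zero]; exact zero_mem _
      | add u v _ _ hu' hv' => rw [mul_add]; exact add_mem hu' hv'
      | smul c u _ hu' =>
          rw [smul_def', mul_left_comm, ← smul_def']
          exact Submodule.smul_mem _ _ hu'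
  | zero => intro b _; rw [zero_mul]; exact zero_mem _
  | add u v _ _ hu' hv' => intro b hb; rw [add_mul]; exact add_mem (hu' b hb) (hv' b hb)
  | smul c u _ hu' =>
      intro b hb
      rw [smul_def', mul_assoc, ← smul_def']
      exact Submodule.smul_mem _ _ (hu' b hb)

private lemma one_mem_SpanS : (1 : MvPolynomial (Fin 3) k) ∈ SpanS k := by
  have := mem_span_pow k 0 0
  simpa using this

private lemma SpanS_top : SpanS k = ⊤ := by
  have hmono : ∀ (m : MvPolynomial (Fin 3) k) (hm : m ∈ Algebra.adjoin k {xP k, PP k}),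
      m ∈ SpanS k := by
    intro m hm
    have h := Submodule.smul_mem (SpanS k) (⟨m, hm⟩ : ↥(Algebra.adjoin k {xP k, PP k}))
      (one_mem_SpanS k)
    rw [smul_def', mul_one] at h
    exact h
  rw [eq_top_iff]
  intro b _
  induction b using MvPolynomial.induction_on with
  | C a => exact hmono _ (Subalgebra.algebraMap_mem _ a)
  | add p q hp hq => exact add_mem (hp trivial) (hq trivial)
  | mul_X p i hp =>
      refine SpanS_mul_mem k p (hp trivial) (X i) ?_
      fin_cases i
      · exact hmono _ (hxA k)
      · have h1 := sub_mem (hmono _ (hPA k)) (mem_span_pow k 2 0)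
        have he : PP k - QP k ^ 2 * zP k ^ 0 = yP k := by
          simp only [PP, pow_zero, mul_one]; ring
        rw [he] at h1
        exact h1
      · have h1 := mem_span_pow k 0 1
        have he : QP k ^ 0 * zP k ^ 1 = zP k := by simp
        rw [he] at h1
        exact h1

private lemma linind : LinearIndependent (↥(Algebra.adjoin k {xP k, PP k}))
    (fun p : Fin 4 × ℕ => QP k ^ (p.1 : ℕ) * zP k ^ p.2) := by
  rw [linearIndependent_iff']
  intro s g hsum p hp
  classical
  have h0 : ∑ q ∈ s, Polynomial.C ((Phi k ((g q : MvPolynomial (Fin 3) k))).coeff 0) * wQ k q = 0 := by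
    have h1 := congrArg (Phi k) hsum
    rw [map_sum, map_zero] at h1
    rw [← h1]
    refine Finset.sum_congr rfl fun q _ => ?_
    rw [smul_def', map_mul, Phi_v, ← Phi_A_eq_C k (g q).2]
  have h2 := distinct_deg s _ (wQ k) (fun i _ => wQ_ne k i) (fun i _ j _ h => wQ_deg_inj k h) h0 p hp
  have h3 : Phi k ((g p : MvPolynomial (Fin 3) k)) = 0 := by
    rw [Phi_A_eq_C k (g p).2, h2, Polynomial.C_0]
  exact Subtype.ext (Phi_A_inj k (g p).2 h3)

private instance : NoZeroSMulDivisors ℕ (FractionRing (MvPolynomial (Fin 2) k)) := by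
  constructor
  intro n a h
  rw [nsmul_eq_mul, mul_eq_zero] at h
  rcases h with h | h
  · left; exact_mod_cast h
  · right; exact h

private lemma ker_to_A (b : MvPolynomial (Fin 3) k) (hb : Dder k b = 0) :
    b ∈ Algebra.adjoin k {xP k, PP k} := by
  classical
  have hderiv : Polynomial.derivative (Phi k b) = 0 := by
    have h1 := Phi_D k b
    rw [hb, map_zero] at h1
    have h2 : Polynomial.C (tF k) * Polynomial.derivative (Phi k b) = 0 := by
      linear_combination h1
    rw [mul_eq_zero] at h2
    exact h2.resolve_left (fun hh => htne k (by simpa using (Polynomial.C_eq_zero).mp hh))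
  have hC : Phi k b = Polynomial.C ((Phi k b).coeff 0) :=
    Polynomial.eq_C_of_derivative_eq_zero hderiv
  have hbS : b ∈ SpanS k := by rw [SpanS_top]; trivial
  rw [SpanS, Finsupp.mem_span_range_iff_exists_finsupp] at hbS
  obtain ⟨γ, hγ⟩ := hbS
  set p0 : Fin 4 × ℕ := (0, 0) with hp0
  set s : Finset (Fin 4 × ℕ) := insert p0 γ.support with hs
  have hw1 : wQ k p0 = 1 := by simp [wQ, hp0]
  have hPhib : Phi k b = ∑ q ∈ s, Polynomial.C ((Phi k ((γ q : MvPolynomial (Fin 3) k))).coeff 0) * wQ k q := by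
    rw [← hγ, Finsupp.sum]
    rw [map_sum]
    rw [Finset.sum_subset (Finset.subset_insert p0 γ.support)]
    · refine Finset.sum_congr rfl fun q _ => ?_
      rw [smul_def', map_mul, Phi_v, ← Phi_A_eq_C k (γ q).2]
    · intro q _ hq
      rw [Finsupp.notMem_support_iff.mp hq]
      simp [smul_def']
  set δ : Fin 4 × ℕ → FractionRing (MvPolynomial (Fin 2) k) :=
    fun q => (Phi k ((γ q : MvPolynomial (Fin 3) k))).coeff 0 -
      if q = p0 then (Phi k b).coeff 0 else 0 with hδ
  have hsum0 : ∑ q ∈ s, Polynomial.C (δ q) * wQ k q = 0 := by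
    have hsplit : ∀ q, Polynomial.C (δ q) * wQ k q =
        Polynomial.C ((Phi k ((γ q : MvPolynomial (Fin 3) k))).coeff 0) * wQ k q -
        Polynomial.C (if q = p0 then (Phi k b).coeff 0 else 0) * wQ k q := by
      intro q; rw [hδ]; simp only [map_sub]; ring
    rw [Finset.sum_congr rfl fun q _ => hsplit q, Finset.sum_sub_distrib, ← hPhib]
    rw [Finset.sum_eq_single p0]
    · rw [if_pos rfl, hw1, mul_one, ← hC, sub_self]
    · intro q _ hq; rw [if_neg hq, Polynomial.C_0, zero_mul]
    · intro hh; exact absurd (Finset.mem_insert_self p0 _) hh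
  have hzero := distinct_deg s δ (wQ k) (fun i _ => wQ_ne k i)
    (fun i _ j _ h => wQ_deg_inj k h) hsum0
  have hsupp : γ.support ⊆ {p0} := by
    intro q hq
    rw [Finset.mem_singleton]
    by_contra hne
    have h4 := hzero q (Finset.mem_insert_of_mem hq)
    rw [hδ] at h4
    simp only [if_neg hne, sub_zero] at h4
    have h5 : Phi k ((γ q : MvPolynomial (Fin 3) k)) = 0 := by
      rw [Phi_A_eq_C k (γ q).2, h4, Polynomial.C_0]
    have h6 := Phi_A_inj k (γ q).2 h5
    exact Finsupp.mem_support_iff.mp hq (Subtype.ext h6)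
  have hbval : b = ((γ p0 : ↥(Algebra.adjoin k {xP k, PP k})) : MvPolynomial (Fin 3) k) := by
    rw [← hγ, Finsupp.sum]
    rw [Finset.sum_subset hsupp]
    · rw [Finset.sum_singleton, smul_def', hp0]
      simp
    · intro q _ hq
      rw [Finsupp.notMem_support_iff.mp hq]
      simp [smul_def']
  rw [hbval]
  exact SetLike.coe_mem _

private lemma A_to_ker (b : MvPolynomial (Fin 3) k) (hb : b ∈ Algebra.adjoin k {xP k, PP k}) :
    Dder k b = 0 := by
  induction hb using Algebra.adjoin_induction with
  | mem u hu =>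
      rcases Set.mem_insert_iff.mp hu with h | h
      · rw [h]; exact D_x k
      · rw [Set.mem_singleton_iff.mp h]; exact D_P k
  | algebraMap r => exact Derivation.map_algebraMap _ r
  | add u v _ _ hu hv => rw [map_add, hu, hv, add_zero]
  | mul u v _ _ hu hv => rw [Derivation.leibniz, hu, hv, smul_zero, smul_zero, add_zero]

end FBE3

/-- Let `B = k[x,y,z]`, `Q = xz + y²`, `P = y + Q²`, and `D = 2xQ ∂_y − (1 + 4yQ) ∂_z`
(a locally nilpotent derivation with kernel `A = k[x,P]`). Then `B = ⊕ A Qⁱ zʲ`, the sum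
over `0 ≤ i ≤ 3`, `j ≥ 0`; in particular `B` is a free `A`-module with basis
`{ Qⁱ zʲ : 0 ≤ i ≤ 3, j ≥ 0 }`. -/
theorem free_basis_example_dim3 {k : Type*} [Field k] [CharZero k]
    (x y z Q P : MvPolynomial (Fin 3) k)
    (hx : x = X 0) (hy : y = X 1) (hz : z = X 2)
    (hQ : Q = x * z + y ^ 2) (hP : P = y + Q ^ 2)
    (D : Derivation k (MvPolynomial (Fin 3) k) (MvPolynomial (Fin 3) k))
    (hD : D = (2 * x * Q) • pderiv 1 - (1 + 4 * y * Q) • pderiv 2)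
    (A : Subalgebra k (MvPolynomial (Fin 3) k))
    (hA : A = Algebra.adjoin k {x, P}) :
    (∀ b, D b = 0 ↔ b ∈ A) ∧
    LinearIndependent A (fun p : Fin 4 × ℕ => Q ^ (p.1 : ℕ) * z ^ p.2) ∧
    Submodule.span A (Set.range fun p : Fin 4 × ℕ => Q ^ (p.1 : ℕ) * z ^ p.2) = ⊤ := by
  subst hx hy hz hQ hP hD hA
  refine ⟨fun b => ⟨fun h => ker_to_A k b h, fun h => A_to_ker k b h⟩, linind k, SpanS_top k⟩
end

section
/- Let B = k[x₁,x₂,y₁,y₂] be a polynomial ring in four variables over a field k of characteristic zero, and T = x₁ ∂_{y₁} + x₂ ∂_{y₂} the locally nilpotent derivation with kernel A = k[x₁, x₂, g] where g = x₁y₂ − x₂y₁. Then the first degree module F₁ = ker T² equals A + A y₁ + A y₂, and the plinth ideal T F₁ equals x₁ A + x₂ A. -/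
/-!
Write `x₁, x₂, y₁, y₂` for `X 0, X 1, X 2, X 3`.

`ker T = A`: induct on the degree of a homogeneous `f ∈ ker T`. As `T` commutes with `∂/∂y₁` and
`∂/∂y₂`, both derivatives of `f` lie in `A = k[x₁, x₂, g]`, a polynomial ring in `x₁, x₂, g`.
Then `Tf = x₁ ∂f/∂y₁ + x₂ ∂f/∂y₂ = 0` forces `∂f/∂y₁ = x₂ q`, `∂f/∂y₂ = -x₁ q` with `q ∈ A`, and
integrating `q` with respect to `g` gives `G ∈ A` with the same `y`-derivatives, so
`f - G ∈ k[x₁, x₂]`.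

Plinth ideal: every element of `A` is `x₁ a₁ + x₂ a₂ + p(g)`, and `x₁ A + x₂ A ⊆ T B`, so it
suffices to see that `p(g) ∈ T B` forces `p(g) = 0`. Now `T`, `S = y₁ ∂/∂x₁ + y₂ ∂/∂x₂` and
`H = [T, S]` span an `sl₂`, `p(g)` is killed by `S` and has `H`-weight `0`, so it has a preimage `φ`
of weight `-2`; as `S` is locally nilpotent, the `sl₂` relations force `φ = 0`.

Finally `T² b = 0` puts `T b` in the plinth ideal, `T b = x₁ a₁ + x₂ a₂ = T (a₁ y₁ + a₂ y₂)`, and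
`b - a₁ y₁ - a₂ y₂ ∈ ker T = A`.
-/

open MvPolynomial

namespace MvPolynomial

variable {R σ M : Type*}

lemma IsWeightedHomogeneous.X_mul_pderiv [CommSemiring R] [AddCommGroup M] {w : σ → M}
    {φ : MvPolynomial σ R} {n : M} (hφ : φ.IsWeightedHomogeneous w n) (i j : σ) :
    (X i * pderiv j φ).IsWeightedHomogeneous w (n + w i - w j) := by
  convert (isWeightedHomogeneous_X R w i).mul (hφ.pderiv (sub_add_cancel n (w j))) using 1
  abel

lemma IsWeightedHomogeneous.eq_zero_of_neg [CommSemiring R] {w : σ → ℤ} (hw : ∀ i, 0 ≤ w i)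
    {φ : MvPolynomial σ R} {n : ℤ} (hφ : φ.IsWeightedHomogeneous w n) (hn : n < 0) : φ = 0 := by
  ext μ
  by_contra h
  have hμ : 0 ≤ Finsupp.weight w μ := by
    rw [Finsupp.weight_apply]
    exact Finsupp.sum_nonneg fun i _ => nsmul_nonneg (hw i) _
  rw [hφ h] at hμ
  exact absurd hn (not_lt.mpr hμ)

theorem IsWeightedHomogeneous.sum_weight_X_mul_pderiv_int [CommRing R] [Fintype σ]
    {w : σ → ℤ} {φ : MvPolynomial σ R} {n : ℤ} (h : φ.IsWeightedHomogeneous w n) :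
    ∑ i : σ, w i • (X i * pderiv i φ) = n • φ := by
  induction h using IsWeightedHomogeneous.induction_on with
  | zero => simp
  | add p q _ _ hp hq => simp only [map_add, mul_add, smul_add, Finset.sum_add_distrib, hp, hq]
  | monomial d r hd =>
    rw [← hd, Finsupp.weight_apply, Finsupp.sum_fintype _ _ (by simp), Finset.sum_smul]
    refine Finset.sum_congr rfl fun i _ => ?_
    rw [X_mul_pderiv_monomial, ← natCast_zsmul, smul_smul, nsmul_eq_mul, mul_comm]

lemma weightedHomogeneousComponent_apply_of_shift [CommSemiring R] [AddCancelCommMonoid M]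
    {w : σ → M} (L : MvPolynomial σ R →ₗ[R] MvPolynomial σ R) (δ : M)
    (hL : ∀ m φ, φ.IsWeightedHomogeneous w m → (L φ).IsWeightedHomogeneous w (m + δ))
    (m : M) (φ : MvPolynomial σ R) :
    weightedHomogeneousComponent w (m + δ) (L φ) = L (weightedHomogeneousComponent w m φ) := by
  classical
  induction φ using MvPolynomial.induction_on' with
  | add p q hp hq => simp only [map_add, hp, hq]
  | monomial μ a =>
    have hμ := isWeightedHomogeneous_monomial w μ a rfl
    rw [weightedHomogeneousComponent_of_mem hμ, weightedHomogeneousComponent_of_mem (hL _ _ hμ),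
      add_left_inj]
    split_ifs <;> simp

lemma exists_iterate_eq_zero_of_lowers_weight [CommSemiring R] {F : Type*}
    [FunLike F (MvPolynomial σ R) (MvPolynomial σ R)]
    [AddMonoidHomClass F (MvPolynomial σ R) (MvPolynomial σ R)] (D : F) {w : σ → ℤ}
    (hw : ∀ i, 0 ≤ w i)
    (hD : ∀ n φ, φ.IsWeightedHomogeneous w n → (D φ).IsWeightedHomogeneous w (n - 1))
    (φ : MvPolynomial σ R) : ∃ N, D^[N] φ = 0 := by
  induction φ using MvPolynomial.induction_on' with
  | monomial μ a =>
    have hiter : ∀ j : ℕ,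
        (D^[j] (monomial μ a)).IsWeightedHomogeneous w (Finsupp.weight w μ - j) := by
      intro j
      induction j with
      | zero => simpa using isWeightedHomogeneous_monomial w μ a rfl
      | succ j ih =>
        rw [Function.iterate_succ_apply', Nat.cast_succ, ← sub_sub]
        exact hD _ _ ih
    refine ⟨(Finsupp.weight w μ).toNat + 1, (hiter _).eq_zero_of_neg hw ?_⟩
    push_cast
    omega
  | add p q hp hq =>
    obtain ⟨Np, hNp⟩ := hp
    obtain ⟨Nq, hNq⟩ := hq
    refine ⟨Nq + Np, ?_⟩
    rw [iterate_map_add, Function.iterate_add_apply, hNp, iterate_map_zero, add_comm Nq,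
      Function.iterate_add_apply, hNq, iterate_map_zero, add_zero]

lemma mem_supported_of_pderiv_eq_zero [CommSemiring R] [NoZeroDivisors R] [CharZero R]
    {s : Set σ} {f : MvPolynomial σ R} (h : ∀ i ∉ s, pderiv i f = 0) : f ∈ supported R s := by
  classical
  rw [mem_supported]
  intro i hi
  by_contra his
  obtain ⟨μ, hμ, hiμ⟩ := (mem_vars_iff_mem_support i).mp hi
  have hc := congrArg (coeff (μ - Finsupp.single i 1)) (h i his)
  rw [coeff_pderiv, coeff_zero, tsub_add_cancel_of_le (Finsupp.single_le_iff.mpr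
    (Nat.one_le_iff_ne_zero.mpr (Finsupp.mem_support_iff.mp hiμ)))] at hc
  exact mul_ne_zero (mem_support_iff.mp hμ) (Nat.cast_add_one_ne_zero _) hc

lemma exists_pderiv_eq [Field R] [CharZero R] (i : σ) (q : MvPolynomial σ R) :
    ∃ G, pderiv i G = q := by
  classical
  refine ⟨∑ μ ∈ q.support, monomial (μ + Finsupp.single i 1) (coeff μ q / (μ i + 1)), ?_⟩
  conv_rhs => rw [q.as_sum]
  rw [map_sum]
  refine Finset.sum_congr rfl fun μ _ => ?_
  rw [pderiv_monomial, add_tsub_cancel_right, Finsupp.add_apply, Finsupp.single_eq_same,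
    Nat.cast_add_one, div_mul_cancel₀ _ (Nat.cast_add_one_ne_zero _)]

lemma exists_eq_X_mul_of_X_mul_add_X_mul_eq_zero [CommRing R] [IsDomain R] {i j : σ}
    (hij : i ≠ j) {P Q : MvPolynomial σ R} (h : X i * P + X j * Q = 0) :
    ∃ q, P = X j * q ∧ Q = -(X i * q) := by
  have hdvd : X j ∣ X i * P := ⟨-Q, by linear_combination h⟩
  obtain ⟨q, rfl⟩ := (X_dvd_mul_iff.mp hdvd).resolve_left (X_dvd_X.not.mpr hij.symm)
  refine ⟨q, rfl, mul_left_cancel₀ (X_ne_zero j) ?_⟩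
  linear_combination h

end MvPolynomial

lemma Derivation.map_aeval_eq_sum_pderiv {R A σ : Type*} [CommSemiring R] [CommSemiring A]
    [Algebra R A] [Fintype σ] (D : Derivation R A A) (v : σ → A) (Q : MvPolynomial σ R) :
    D (aeval v Q) = ∑ i, aeval v (pderiv i Q) * D (v i) := by
  classical
  induction Q using MvPolynomial.induction_on with
  | C r => simp
  | add p q hp hq => simp only [map_add, hp, hq, add_mul, Finset.sum_add_distrib]
  | mul_X p j hp =>
    simp only [map_mul, aeval_X, Derivation.leibniz, hp, pderiv_X, map_add, add_mul,
      Finset.sum_add_distrib, smul_eq_mul, Finset.mul_sum]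
    simp [Pi.single_apply, mul_comm, mul_left_comm]

theorem eq_zero_of_neg_weight {M F : Type*} [AddCommGroup M] [IsAddTorsionFree M] [FunLike F M M]
    [AddMonoidHomClass F M M] (T S : F) {φ : M} {c : ℤ} (hc : c < 0)
    (hTS : ∀ j : ℕ, T (S (S^[j] φ)) - S (T (S^[j] φ)) = (c - 2 * j) • S^[j] φ)
    (hST : S (T φ) = 0) (hnil : ∃ N, S^[N] φ = 0) : φ = 0 := by
  -- The coefficients `(j + 1) (c - j)` never vanish, so `S^[j + 1] φ = 0` forces `S^[j] φ = 0`.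
  have hT : ∀ j : ℕ, T (S^[j + 1] φ) = ((j + 1) * (c - j)) • S^[j] φ := by
    intro j
    induction j with
    | zero => simpa [hST] using hTS 0
    | succ j ih =>
      rw [Function.iterate_succ_apply', sub_eq_iff_eq_add'.mp (hTS (j + 1)), ih, map_zsmul,
        ← Function.iterate_succ_apply' S, ← add_smul]
      congr 1
      push_cast
      ring
  have hdown : ∀ j : ℕ, S^[j + 1] φ = 0 → S^[j] φ = 0 := by
    intro j hj
    have hcoef : ((j : ℤ) + 1) * (c - j) ≠ 0 := by nlinarith
    have := hT j
    rw [hj, map_zero, eq_comm, smul_eq_zero] at this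
    exact this.resolve_left hcoef
  obtain ⟨N, hN⟩ := hnil
  induction N with
  | zero => exact hN
  | succ N ih => exact ih (hdown N hN)

namespace Winkelmann

variable {k : Type*} [Field k]

local notation "𝔹" => MvPolynomial (Fin 4) k

noncomputable def T : Derivation k 𝔹 𝔹 := (X 0 : 𝔹) • pderiv 2 + (X 1 : 𝔹) • pderiv 3

noncomputable def S : Derivation k 𝔹 𝔹 := (X 2 : 𝔹) • pderiv 0 + (X 3 : 𝔹) • pderiv 1

noncomputable def g : 𝔹 := X 0 * X 3 - X 1 * X 2

noncomputable def A : Subalgebra k 𝔹 := Algebra.adjoin k {X 0, X 1, g}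

noncomputable def θ : MvPolynomial (Fin 3) k →ₐ[k] 𝔹 := aeval ![X 0, X 1, g]

def weightH : Fin 4 → ℤ := ![1, 1, -1, -1]

def weightX : Fin 4 → ℤ := ![1, 1, 0, 0]

lemma T_apply (f : 𝔹) : T f = X 0 * pderiv 2 f + X 1 * pderiv 3 f := by
  simp [T]

lemma S_apply (f : 𝔹) : S f = X 2 * pderiv 0 f + X 3 * pderiv 1 f := by
  simp [S]

lemma T_g : T (g : 𝔹) = 0 := by
  simp [T_apply, g, pderiv_X, mul_comm]

lemma S_g : S (g : 𝔹) = 0 := by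
  simp [S_apply, g, pderiv_X, mul_comm]

lemma T_eq_zero_of_mem_A {a : 𝔹} (ha : a ∈ A) : T a = 0 := by
  refine Derivation.eqOn_adjoin (D2 := 0) ?_ ha
  rintro _ (rfl | rfl | rfl)
  · simp [T_apply]
  · simp [T_apply]
  · exact T_g

lemma T_mul_X2_add_mul_X3 {a₁ a₂ : 𝔹} (h₁ : T a₁ = 0) (h₂ : T a₂ = 0) :
    T (a₁ * X 2 + a₂ * X 3) = X 0 * a₁ + X 1 * a₂ := by
  rw [map_add, Derivation.leibniz, Derivation.leibniz, h₁, h₂]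
  simp [T_apply, pderiv_X, mul_comm]

lemma T_pderiv_comm {i : Fin 4} (hi : i = 2 ∨ i = 3) (f : 𝔹) :
    T (pderiv i f) = pderiv i (T f) := by
  have h : ⁅(pderiv i : Derivation k 𝔹 𝔹), T (k := k)⁆ = 0 := by
    refine derivation_ext fun j => ?_
    rcases hi with rfl | rfl <;> fin_cases j <;>
      simp [Derivation.commutator_apply, T_apply, pderiv_X]
  have hf := DFunLike.congr_fun h f
  rw [Derivation.commutator_apply, Derivation.zero_apply, sub_eq_zero] at hf
  exact hf.symm

lemma A_eq_range_θ : A = (θ : MvPolynomial (Fin 3) k →ₐ[k] 𝔹).range := by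
  rw [θ, ← Algebra.adjoin_range_eq_range_aeval, Matrix.range_cons, Matrix.range_cons,
    Matrix.range_cons_empty, Set.singleton_union, Set.singleton_union]
  rfl

lemma θ_injective : Function.Injective (θ : MvPolynomial (Fin 3) k →ₐ[k] 𝔹) := by
  let ι := algebraMap (MvPolynomial (Fin 3) k) (FractionRing (MvPolynomial (Fin 3) k))
  let π : 𝔹 →ₐ[k] FractionRing (MvPolynomial (Fin 3) k) :=
    aeval ![ι (X 0), ι (X 1), 0, ι (X 2) / ι (X 0)]
  -- `y₁ ↦ 0, y₂ ↦ c / a` sends `(x₁, x₂, g)` to `(a, b, c)`.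
  have hπθ : π.comp θ = IsScalarTower.toAlgHom k _ _ := by
    refine algHom_ext fun i => ?_
    have hX0 : ι (X 0) ≠ 0 := by simp [ι]
    fin_cases i <;> simp [π, θ, g, ι, mul_div_cancel₀ _ hX0]
  intro P Q h
  have hπ := congrArg π h
  rw [← AlgHom.comp_apply, ← AlgHom.comp_apply, hπθ] at hπ
  exact IsFractionRing.injective _ _ hπ

lemma pderiv_two_θ (Q : MvPolynomial (Fin 3) k) : pderiv 2 (θ Q) = -(X 1 * θ (pderiv 2 Q)) := by
  rw [θ, Derivation.map_aeval_eq_sum_pderiv]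
  simp [Fin.sum_univ_three, g, pderiv_X, mul_comm]

lemma pderiv_three_θ (Q : MvPolynomial (Fin 3) k) : pderiv 3 (θ Q) = X 0 * θ (pderiv 2 Q) := by
  rw [θ, Derivation.map_aeval_eq_sum_pderiv]
  simp [Fin.sum_univ_three, g, pderiv_X, mul_comm]

lemma supported_le_A : supported k ({0, 1} : Set (Fin 4)) ≤ A := by
  rw [supported_eq_adjoin_X, Set.image_pair]
  exact Algebra.adjoin_mono (by simp [Set.insert_subset_iff])

lemma mem_A_of_pderiv_mem [CharZero k] {f : 𝔹} (hf : T f = 0) (h₂ : pderiv 2 f ∈ A)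
    (h₃ : pderiv 3 f ∈ A) : f ∈ A := by
  rw [A_eq_range_θ] at h₂ h₃
  obtain ⟨Q₂, hQ₂ : θ Q₂ = pderiv 2 f⟩ := h₂
  obtain ⟨Q₃, hQ₃ : θ Q₃ = pderiv 3 f⟩ := h₃
  obtain ⟨q, rfl, rfl⟩ : ∃ q, Q₂ = X 1 * q ∧ Q₃ = -(X 0 * q) := by
    refine exists_eq_X_mul_of_X_mul_add_X_mul_eq_zero (by decide) (θ_injective ?_)
    simp only [map_add, map_mul, map_zero, hQ₂, hQ₃]
    simpa [θ, T_apply] using hf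
  obtain ⟨G, hG⟩ := exists_pderiv_eq 2 (-q)
  have hy : f - θ G ∈ supported k ({0, 1} : Set (Fin 4)) := by
    refine mem_supported_of_pderiv_eq_zero fun i hi => ?_
    obtain rfl | rfl : i = 2 ∨ i = 3 := by fin_cases i <;> simp at hi ⊢
    · rw [map_sub, pderiv_two_θ, hG, ← hQ₂]
      simp [θ]
    · rw [map_sub, pderiv_three_θ, hG, ← hQ₃]
      simp [θ]
  have hθG : θ G ∈ A := by
    rw [A_eq_range_θ]
    exact θ.mem_range_self G
  simpa using add_mem (supported_le_A hy) hθG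

lemma isWeightedHomogeneous_T {w : Fin 4 → ℤ} {δ : ℤ} (h₀ : w 0 - w 2 = δ) (h₁ : w 1 - w 3 = δ)
    {f : 𝔹} {c : ℤ} (hf : f.IsWeightedHomogeneous w c) : (T f).IsWeightedHomogeneous w (c + δ) := by
  have h₀₂ := hf.X_mul_pderiv 0 2
  have h₁₃ := hf.X_mul_pderiv 1 3
  rw [add_sub_assoc, h₀] at h₀₂
  rw [add_sub_assoc, h₁] at h₁₃
  rw [T_apply]
  exact h₀₂.add h₁₃

lemma mem_A_of_isWeightedHomogeneous [CharZero k] {f : 𝔹} {c : ℤ}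
    (hc : f.IsWeightedHomogeneous (1 : Fin 4 → ℤ) c) (hf : T f = 0) : f ∈ A := by
  suffices h : ∀ n : ℕ, ∀ (c : ℤ) (f : 𝔹), f.IsWeightedHomogeneous (1 : Fin 4 → ℤ) c → c < n →
      T f = 0 → f ∈ A from h (c.toNat + 1) c f hc (by omega) hf
  intro n
  induction n with
  | zero =>
    intro c f hc hcn _
    rw [hc.eq_zero_of_neg (fun _ => zero_le_one) (by exact_mod_cast hcn)]
    exact zero_mem A
  | succ n ih =>
    intro c f hc hcn hf
    have hy : ∀ i : Fin 4, (i = 2 ∨ i = 3) → pderiv i f ∈ A := fun i hi =>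
      ih (c - 1) _ (hc.pderiv (by simp)) (by push_cast at hcn; omega)
        (by rw [T_pderiv_comm hi, hf, map_zero])
    exact mem_A_of_pderiv_mem hf (hy 2 (by simp)) (hy 3 (by simp))

lemma mem_A_of_T_eq_zero [CharZero k] {f : 𝔹} (hf : T f = 0) : f ∈ A := by
  rw [← sum_weightedHomogeneousComponent (1 : Fin 4 → ℤ) f]
  refine finsum_induction _ (zero_mem A) (fun _ _ => add_mem) fun c => ?_
  refine mem_A_of_isWeightedHomogeneous (weightedHomogeneousComponent_isWeightedHomogeneous _ _) ?_
  have := weightedHomogeneousComponent_apply_of_shift T.toLinearMap 0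
    (fun _ _ h => isWeightedHomogeneous_T (w := 1) (δ := 0) (by simp) (by simp) h) c f
  simpa [hf] using this.symm

lemma isWeightedHomogeneous_S {w : Fin 4 → ℤ} {δ : ℤ} (h₀ : w 2 - w 0 = δ) (h₁ : w 3 - w 1 = δ)
    {f : 𝔹} {c : ℤ} (hf : f.IsWeightedHomogeneous w c) : (S f).IsWeightedHomogeneous w (c + δ) := by
  have h₂₀ := hf.X_mul_pderiv 2 0
  have h₃₁ := hf.X_mul_pderiv 3 1
  rw [add_sub_assoc, h₀] at h₂₀
  rw [add_sub_assoc, h₁] at h₃₁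
  rw [S_apply]
  exact h₂₀.add h₃₁

lemma T_S_sub_S_T {f : 𝔹} {c : ℤ} (hf : f.IsWeightedHomogeneous weightH c) :
    T (S f) - S (T f) = c • f := by
  have h : ⁅T (k := k), S (k := k)⁆ = (X 0 : 𝔹) • pderiv 0 + (X 1 : 𝔹) • pderiv 1
      - (X 2 : 𝔹) • pderiv 2 - (X 3 : 𝔹) • pderiv 3 := by
    refine derivation_ext fun j => ?_
    fin_cases j <;> simp [Derivation.commutator_apply, T_apply, S_apply, pderiv_X]
  rw [← Derivation.commutator_apply, h, ← hf.sum_weight_X_mul_pderiv_int]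
  simp [Fin.sum_univ_four, weightH, sub_eq_add_neg]

lemma S_iterate_eventually_eq_zero (f : 𝔹) : ∃ N, S^[N] f = 0 := by
  refine exists_iterate_eq_zero_of_lowers_weight S (w := weightX) ?_ (fun _ _ h => ?_) f
  · intro i
    fin_cases i <;> simp [weightX]
  · simpa [sub_eq_add_neg] using isWeightedHomogeneous_S (by simp [weightX]) (by simp [weightX]) h

lemma S_eq_zero_of_mem_adjoin_g {p : 𝔹} (hp : p ∈ Algebra.adjoin k {g}) : S p = 0 :=
  Derivation.eqOn_adjoin (D2 := 0) (fun _ hx => (Set.mem_singleton_iff.mp hx) ▸ S_g) hp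

lemma isWeightedHomogeneous_g : (g : 𝔹).IsWeightedHomogeneous weightH 0 := by
  have hX := isWeightedHomogeneous_X k weightH
  have h₀₃ : (X 0 * X 3 : 𝔹).IsWeightedHomogeneous weightH 0 := by
    simpa [weightH] using (hX 0).mul (hX 3)
  have h₁₂ : (X 1 * X 2 : 𝔹).IsWeightedHomogeneous weightH 0 := by
    simpa [weightH] using (hX 1).mul (hX 2)
  exact h₀₃.sub h₁₂

lemma isWeightedHomogeneous_of_mem_adjoin_g {p : 𝔹} (hp : p ∈ Algebra.adjoin k {g}) :
    p.IsWeightedHomogeneous weightH 0 := by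
  induction hp using Algebra.adjoin_induction with
  | mem x hx =>
    rw [Set.mem_singleton_iff.mp hx]
    exact isWeightedHomogeneous_g
  | algebraMap r => exact isWeightedHomogeneous_C _ r
  | add x y _ _ hx hy => exact hx.add hy
  | mul x y _ _ hx hy => simpa using hx.mul hy

lemma eq_zero_of_mem_adjoin_g_of_T_eq [CharZero k] {p φ : 𝔹} (hp : p ∈ Algebra.adjoin k {g})
    (hφ : T φ = p) : p = 0 := by
  set φ' := weightedHomogeneousComponent weightH (-2) φ
  have hφ'hom : ∀ j : ℕ, (S^[j] φ').IsWeightedHomogeneous weightH (-2 - 2 * j) := by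
    intro j
    induction j with
    | zero => simpa using weightedHomogeneousComponent_isWeightedHomogeneous (-2) φ
    | succ j ih =>
      rw [Function.iterate_succ_apply']
      convert isWeightedHomogeneous_S (δ := -2) (by simp [weightH]) (by simp [weightH]) ih using 1
      push_cast
      ring
  have hTφ' : T φ' = p := by
    have := weightedHomogeneousComponent_apply_of_shift T.toLinearMap 2
      (fun _ _ h => isWeightedHomogeneous_T (w := weightH) (by simp [weightH])
        (by simp [weightH]) h) (-2) φ
    rw [neg_add_cancel, Derivation.coeFn_coe, hφ,
      weightedHomogeneousComponent_eq_self (isWeightedHomogeneous_of_mem_adjoin_g hp)] at this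
    exact this.symm
  have hφ'0 : φ' = 0 := eq_zero_of_neg_weight T S (by norm_num) (fun j => T_S_sub_S_T (hφ'hom j))
    (by rw [hTφ']; exact S_eq_zero_of_mem_adjoin_g hp) (S_iterate_eventually_eq_zero φ')
  rw [← hTφ', hφ'0, map_zero]

lemma X0_mul_add_X1_mul_mem_A {a₁ a₂ : 𝔹} (h₁ : a₁ ∈ A) (h₂ : a₂ ∈ A) :
    X 0 * a₁ + X 1 * a₂ ∈ A :=
  add_mem (mul_mem (Algebra.subset_adjoin (by simp)) h₁)
    (mul_mem (Algebra.subset_adjoin (by simp)) h₂)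

lemma exists_eq_X0_mul_add_X1_mul_add_of_mem_A {a : 𝔹} (ha : a ∈ A) :
    ∃ a₁ ∈ A, ∃ a₂ ∈ A, ∃ p ∈ Algebra.adjoin k {g}, a = X 0 * a₁ + X 1 * a₂ + p := by
  have hg : Algebra.adjoin k {g} ≤ A := Algebra.adjoin_mono (by simp)
  induction ha using Algebra.adjoin_induction with
  | mem x hx =>
    rcases hx with rfl | rfl | rfl
    · exact ⟨1, one_mem A, 0, zero_mem A, 0, zero_mem _, by ring⟩
    · exact ⟨0, zero_mem A, 1, one_mem A, 0, zero_mem _, by ring⟩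
    · exact ⟨0, zero_mem A, 0, zero_mem A, g, Algebra.subset_adjoin rfl, by ring⟩
  | algebraMap r =>
    exact ⟨0, zero_mem A, 0, zero_mem A, _, Subalgebra.algebraMap_mem _ r, by ring⟩
  | add x y _ _ hx hy =>
    obtain ⟨a₁, h₁, a₂, h₂, p, hp, rfl⟩ := hx
    obtain ⟨b₁, h₁', b₂, h₂', q, hq, rfl⟩ := hy
    exact ⟨a₁ + b₁, add_mem h₁ h₁', a₂ + b₂, add_mem h₂ h₂', p + q, add_mem hp hq, by ring⟩
  | mul x y _ hy' hx hy =>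
    obtain ⟨a₁, h₁, a₂, h₂, p, hp, rfl⟩ := hx
    obtain ⟨b₁, h₁', b₂, h₂', q, hq, rfl⟩ := hy
    refine ⟨a₁ * (X 0 * b₁ + X 1 * b₂ + q) + p * b₁, ?_,
      a₂ * (X 0 * b₁ + X 1 * b₂ + q) + p * b₂, ?_, p * q, mul_mem hp hq, by ring⟩
    · exact add_mem (mul_mem h₁ hy') (mul_mem (hg hp) h₁')
    · exact add_mem (mul_mem h₂ hy') (mul_mem (hg hp) h₂')

lemma exists_eq_X0_mul_add_X1_mul_of_T_eq [CharZero k] {w b : 𝔹} (hw : T w = 0) (hb : T b = w) :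
    ∃ a₁ ∈ A, ∃ a₂ ∈ A, w = X 0 * a₁ + X 1 * a₂ := by
  obtain ⟨a₁, h₁, a₂, h₂, p, hp, rfl⟩ :=
    exists_eq_X0_mul_add_X1_mul_add_of_mem_A (mem_A_of_T_eq_zero hw)
  have hTp : T (b - (a₁ * X 2 + a₂ * X 3)) = p := by
    rw [map_sub, hb, T_mul_X2_add_mul_X3 (T_eq_zero_of_mem_A h₁) (T_eq_zero_of_mem_A h₂)]
    ring
  rw [eq_zero_of_mem_adjoin_g_of_T_eq hp hTp, add_zero]
  exact ⟨a₁, h₁, a₂, h₂, rfl⟩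

lemma exists_eq_add_mul_X2_add_mul_X3_of_T_T_eq_zero [CharZero k] {b : 𝔹} (hb : T (T b) = 0) :
    ∃ a₀ ∈ A, ∃ a₁ ∈ A, ∃ a₂ ∈ A, b = a₀ + a₁ * X 2 + a₂ * X 3 := by
  obtain ⟨a₁, h₁, a₂, h₂, hTb⟩ := exists_eq_X0_mul_add_X1_mul_of_T_eq hb rfl
  refine ⟨b - (a₁ * X 2 + a₂ * X 3), mem_A_of_T_eq_zero ?_, a₁, h₁, a₂, h₂, by ring⟩
  rw [map_sub, T_mul_X2_add_mul_X3 (T_eq_zero_of_mem_A h₁) (T_eq_zero_of_mem_A h₂), hTb, sub_self]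

theorem T_T_eq_zero_iff [CharZero k] (b : 𝔹) :
    T (T b) = 0 ↔ ∃ a₀ ∈ A, ∃ a₁ ∈ A, ∃ a₂ ∈ A, b = a₀ + a₁ * X 2 + a₂ * X 3 := by
  refine ⟨exists_eq_add_mul_X2_add_mul_X3_of_T_T_eq_zero, ?_⟩
  rintro ⟨a₀, h₀, a₁, h₁, a₂, h₂, rfl⟩
  rw [add_assoc, map_add, T_eq_zero_of_mem_A h₀, zero_add,
    T_mul_X2_add_mul_X3 (T_eq_zero_of_mem_A h₁) (T_eq_zero_of_mem_A h₂)]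
  exact T_eq_zero_of_mem_A (X0_mul_add_X1_mul_mem_A h₁ h₂)

theorem plinth_eq [CharZero k] :
    {w : 𝔹 | T w = 0 ∧ ∃ b, T b = w} = {w | ∃ a₁ ∈ A, ∃ a₂ ∈ A, w = X 0 * a₁ + X 1 * a₂} := by
  ext w
  constructor
  · rintro ⟨hw, b, hb⟩
    exact exists_eq_X0_mul_add_X1_mul_of_T_eq hw hb
  · rintro ⟨a₁, h₁, a₂, h₂, rfl⟩
    exact ⟨T_eq_zero_of_mem_A (X0_mul_add_X1_mul_mem_A h₁ h₂), _,
      T_mul_X2_add_mul_X3 (T_eq_zero_of_mem_A h₁) (T_eq_zero_of_mem_A h₂)⟩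

end Winkelmann

/-- Let `B = k[x₁,x₂,y₁,y₂]` and `T = x₁ ∂_{y₁} + x₂ ∂_{y₂}`, a locally nilpotent
derivation with kernel `A = k[x₁, x₂, g]`, `g = x₁y₂ − x₂y₁`. Then the first degree
module `F₁ = ker T²` equals `A + A y₁ + A y₂`, and the plinth ideal `T F₁ = A ∩ TB`
equals `x₁A + x₂A`. -/
theorem winkelmann_four_variable_module {k : Type*} [Field k] [CharZero k]
    (x1 x2 y1 y2 g : MvPolynomial (Fin 4) k)
    (hx1 : x1 = X 0) (hx2 : x2 = X 1) (hy1 : y1 = X 2) (hy2 : y2 = X 3)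
    (hg : g = x1 * y2 - x2 * y1)
    (T : Derivation k (MvPolynomial (Fin 4) k) (MvPolynomial (Fin 4) k))
    (hT : T = x1 • pderiv 2 + x2 • pderiv 3)
    (A : Subalgebra k (MvPolynomial (Fin 4) k))
    (hA : A = Algebra.adjoin k {x1, x2, g}) :
    (∀ b, T (T b) = 0 ↔ ∃ a0 ∈ A, ∃ a1 ∈ A, ∃ a2 ∈ A, b = a0 + a1 * y1 + a2 * y2) ∧
    ({w | T w = 0 ∧ ∃ b, T b = w} =
      {w : MvPolynomial (Fin 4) k | ∃ a1 ∈ A, ∃ a2 ∈ A, w = x1 * a1 + x2 * a2}) := by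
  subst hx1 hx2 hy1 hy2 hg hT hA
  exact ⟨Winkelmann.T_T_eq_zero_iff, Winkelmann.plinth_eq⟩
end

section
/- Let B = k[x,y,z] over a field k of characteristic zero, D the homogeneous (2,5)-derivation defined by Dh = Jacobian determinant ∂(F,G,h)/∂(x,y,z) with F = xz − y², G = zF² + 2x²yF + x⁵, and A = ker D = k[F,G]. With R = x³ + yF, S = x²y + zF, and M = A + AR + Ax + AxR + Ax² + AS + Ay + AxS + Axy + Ax²S + Az, one has FB ∩ M = FM. -/
set_option maxHeartbeats 1600000
open MvPolynomial

section Aux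
variable {k : Type*} [Field k] [CharZero k]

/-- weight: (s-degree mod 10, t-degree) -/
def w10 : Fin 2 → ZMod 10 × ℕ := ![(1,0), (0,1)]

theorem isWH_pow {σ Mo : Type*} [AddCommMonoid Mo] (w : σ → Mo) {p : MvPolynomial σ k} {m : Mo}
    (hp : p.IsWeightedHomogeneous w m) (n : ℕ) : (p ^ n).IsWeightedHomogeneous w (n • m) := by
  induction n with
  | zero => simpa using isWeightedHomogeneous_one k w
  | succ n ih => rw [pow_succ, succ_nsmul]; exact ih.mul hp

theorem wh_X0_pow (a : ℕ) :
    IsWeightedHomogeneous w10 ((X 0) ^ a : MvPolynomial (Fin 2) k) ((a : ZMod 10), 0) := by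
  have h := isWH_pow w10 (isWeightedHomogeneous_X k w10 0) a
  have hw : a • (w10 0) = (((a : ZMod 10), 0) : ZMod 10 × ℕ) := by
    simp [w10, Prod.ext_iff, nsmul_eq_mul]
  rwa [hw] at h

theorem wh_mono (a b : ℕ) :
    IsWeightedHomogeneous w10 ((X 0) ^ a * (X 1) ^ b : MvPolynomial (Fin 2) k)
      ((a : ZMod 10), b) := by
  have h := (wh_X0_pow a).mul (isWH_pow w10 (isWeightedHomogeneous_X k w10 1) b)
  have hw : (((a : ZMod 10), 0) : ZMod 10 × ℕ) + b • (w10 1) = ((a : ZMod 10), b) := by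
    simp [w10, Prod.ext_iff, nsmul_eq_mul]
  rwa [hw] at h

theorem indep {ι : Type*} [Fintype ι] {Mo σ : Type*} [AddCommMonoid Mo] [DecidableEq Mo]
    (w : σ → Mo) (p : ι → MvPolynomial σ k) (wt : ι → Mo)
    (hp : ∀ i, (p i).IsWeightedHomogeneous w (wt i)) (hw : Function.Injective wt)
    (hs : ∑ i, p i = 0) : ∀ i, p i = 0 := by
  intro j
  have h0 := congrArg (weightedHomogeneousComponent w (wt j)) hs
  rw [map_sum, map_zero, Finset.sum_eq_single j] at h0
  · rwa [(hp j).weightedHomogeneousComponent_same] at h0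
  · exact fun i _ hij => (hp i).weightedHomogeneousComponent_ne _ (fun h => hij (hw h).symm)
  · simp

theorem decomp (q : MvPolynomial (Fin 2) k) :
    ∃ (h : MvPolynomial (Fin 2) k) (r : Polynomial k),
      q = X 0 * h + Polynomial.aeval (X 1 : MvPolynomial (Fin 2) k) r := by
  induction q using MvPolynomial.induction_on with
  | C a => exact ⟨0, Polynomial.C a, by simp⟩
  | add p q hp hq =>
      obtain ⟨h1, r1, e1⟩ := hp; obtain ⟨h2, r2, e2⟩ := hq
      exact ⟨h1 + h2, r1 + r2, by rw [e1, e2, map_add]; ring⟩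
  | mul_X p i hp =>
      obtain ⟨h, r, e⟩ := hp
      fin_cases i
      · exact ⟨h * X 0 + Polynomial.aeval (X 1) r, 0, by rw [e]; simp; ring⟩
      · exact ⟨h * X 1, r * Polynomial.X, by
          rw [e, map_mul, Polynomial.aeval_X]; simp only [Fin.mk_one]; ring⟩

theorem aeval_pow10_wh (r : Polynomial k) :
    IsWeightedHomogeneous w10
      (Polynomial.aeval ((X 0 : MvPolynomial (Fin 2) k) ^ 10) r) 0 := by
  induction r using Polynomial.induction_on with
  | C a => simpa using isWeightedHomogeneous_C w10 a
  | add p q hp hq => rw [map_add]; exact hp.add hq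
  | monomial n a ih =>
      rw [map_mul, map_pow, Polynomial.aeval_X, Polynomial.aeval_C, ← pow_mul, algebraMap_eq]
      have hx : IsWeightedHomogeneous w10
          ((X 0 : MvPolynomial (Fin 2) k) ^ (10 * (n + 1))) 0 := by
        have h := wh_X0_pow (k := k) (10 * (n + 1))
        have : ((10 * (n + 1) : ℕ) : ZMod 10) = 0 := by
          push_cast
          rw [show (10 : ZMod 10) = 0 from by decide]
          ring
        rwa [this] at h
      simpa using (isWeightedHomogeneous_C w10 a).mul hx
end Aux

/-- exponent vectors of the images of the 11 generators -/
def av : Fin 11 → ℕ := ![0, 6, 2, 8, 4, 5, 1, 7, 3, 9, 0]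
def bv : Fin 11 → ℕ := ![0, 0, 0, 0, 0, 1, 1, 1, 1, 1, 2]

theorem wt_inj : Function.Injective (fun i => (((av i : ZMod 10), bv i) : ZMod 10 × ℕ)) := by
  decide

/-- Let `B = k[x,y,z]`, `F = xz − y²`, `G = zF² + 2x²yF + x⁵`, `R = x³ + yF`,
`S = x²y + zF`, and `A = k[F,G]` (the kernel of the homogeneous `(2,5)`-derivation).
With `M = A + AR + Ax + AxR + Ax² + AS + Ay + AxS + Axy + Ax²S + Az`, one has
`FB ∩ M = FM`. -/
theorem two_five_module_saturation {k : Type*} [Field k] [CharZero k]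
    (x y z F G R S : MvPolynomial (Fin 3) k)
    (hx : x = X 0) (hy : y = X 1) (hz : z = X 2)
    (hF : F = x * z - y ^ 2)
    (hG : G = z * F ^ 2 + 2 * x ^ 2 * y * F + x ^ 5)
    (hR : R = x ^ 3 + y * F)
    (hS : S = x ^ 2 * y + z * F)
    (A : Subalgebra k (MvPolynomial (Fin 3) k))
    (hA : A = Algebra.adjoin k {F, G})
    (M : Submodule A (MvPolynomial (Fin 3) k))
    (hM : M = Submodule.span A
      {1, R, x, x * R, x ^ 2, S, y, x * S, x * y, x ^ 2 * S, z}) :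
    {u : MvPolynomial (Fin 3) k | u ∈ M ∧ ∃ b, u = F * b} =
      (fun m => F * m) '' (M : Set (MvPolynomial (Fin 3) k)) := by
  have hFA : F ∈ A := hA ▸ Algebra.subset_adjoin (Set.mem_insert _ _)
  set φ : MvPolynomial (Fin 3) k →ₐ[k] MvPolynomial (Fin 2) k :=
    aeval ![X 0 ^ 2, X 0 * X 1, X 1 ^ 2] with hφ
  have hφx : φ x = X 0 ^ 2 := by rw [hx]; simp [hφ]
  have hφy : φ y = X 0 * X 1 := by rw [hy]; simp [hφ]
  have hφz : φ z = X 1 ^ 2 := by rw [hz]; simp [hφ]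
  have hφF : φ F = 0 := by rw [hF, map_sub, map_mul, map_pow, hφx, hφy, hφz]; ring
  have hφG : φ G = X 0 ^ 10 := by
    rw [hG, map_add, map_add, map_mul, map_mul, map_mul, map_mul, map_pow, map_pow, map_pow,
      hφx, hφy, hφz, hφF]
    simp only [map_ofNat]
    ring
  set v : Fin 11 → MvPolynomial (Fin 3) k :=
    ![1, R, x, x * R, x ^ 2, S, y, x * S, x * y, x ^ 2 * S, z] with hv
  have hsetv : ({1, R, x, x * R, x ^ 2, S, y, x * S, x * y, x ^ 2 * S, z} :
      Set (MvPolynomial (Fin 3) k)) = Set.range v := by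
    ext p
    simp [hv, Matrix.range_cons, Matrix.range_empty, Set.singleton_union]
    tauto
  have hAr : A = (aeval (![F, G] : Fin 2 → MvPolynomial (Fin 3) k)).range := by
    rw [hA, ← Algebra.adjoin_range_eq_range_aeval]
    congr
    ext p
    simp [Matrix.range_cons, Matrix.range_empty, Set.singleton_union]
    tauto
  have hφR : φ R = X 0 ^ 6 := by
    rw [hR, map_add, map_mul, map_pow, hφx, hφy, hφF]; ring
  have hφS : φ S = X 0 ^ 5 * X 1 := by
    rw [hS, map_add, map_mul, map_mul, map_pow, hφx, hφy, hφz, hφF]; ring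
  have hφv : ∀ i, φ (v i) = X 0 ^ av i * X 1 ^ bv i := by
    intro i
    fin_cases i
    · show φ 1 = X 0 ^ (0:ℕ) * X 1 ^ (0:ℕ); simp
    · show φ R = X 0 ^ (6:ℕ) * X 1 ^ (0:ℕ); rw [hφR]; ring
    · show φ x = X 0 ^ (2:ℕ) * X 1 ^ (0:ℕ); rw [hφx]; ring
    · show φ (x * R) = X 0 ^ (8:ℕ) * X 1 ^ (0:ℕ); rw [map_mul, hφx, hφR]; ring
    · show φ (x ^ 2) = X 0 ^ (4:ℕ) * X 1 ^ (0:ℕ); rw [map_pow, hφx]; ring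
    · show φ S = X 0 ^ (5:ℕ) * X 1 ^ (1:ℕ); rw [hφS]; ring
    · show φ y = X 0 ^ (1:ℕ) * X 1 ^ (1:ℕ); rw [hφy]; ring
    · show φ (x * S) = X 0 ^ (7:ℕ) * X 1 ^ (1:ℕ); rw [map_mul, hφx, hφS]; ring
    · show φ (x * y) = X 0 ^ (3:ℕ) * X 1 ^ (1:ℕ); rw [map_mul, hφx, hφy]; ring
    · show φ (x ^ 2 * S) = X 0 ^ (9:ℕ) * X 1 ^ (1:ℕ); rw [map_mul, map_pow, hφx, hφS]; ring
    · show φ z = X 0 ^ (0:ℕ) * X 1 ^ (2:ℕ); rw [hφz]; ring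
  ext u
  simp only [Set.mem_setOf_eq, Set.mem_image, SetLike.mem_coe]
  constructor
  · rintro ⟨huM, b, hub⟩
    rw [hM, hsetv] at huM
    obtain ⟨c, hc⟩ := (Submodule.mem_span_range_iff_exists_fun _).mp huM
    have hq' : ∀ i, ∃ qq : MvPolynomial (Fin 2) k,
        aeval ![F, G] qq = (c i : MvPolynomial (Fin 3) k) := by
      intro i
      have h2 : (c i : MvPolynomial (Fin 3) k) ∈ (aeval (R := k) ![F, G]).range := by
        rw [← hAr]; exact (c i).2
      exact h2
    choose q hq using hq'
    choose h r hd using fun i => decomp (q i)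
    have hH : ∀ i, aeval (![F, G] : Fin 2 → MvPolynomial (Fin 3) k) (h i) ∈ A := by
      intro i; rw [hAr]; exact ⟨h i, rfl⟩
    have hc' : ∀ i, (c i : MvPolynomial (Fin 3) k)
        = F * aeval ![F, G] (h i) + Polynomial.aeval G (r i) := by
      intro i
      rw [← hq i, hd i, map_add, map_mul, aeval_X, ← Polynomial.aeval_algHom_apply,
        aeval_X]
      try simp
    have hφc : ∀ i, φ (c i : MvPolynomial (Fin 3) k)
        = Polynomial.aeval ((X 0 : MvPolynomial (Fin 2) k) ^ 10) (r i) := by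
      intro i
      rw [hc' i, map_add, map_mul, hφF, zero_mul, zero_add,
        ← Polynomial.aeval_algHom_apply, hφG]
    have hsum : ∑ i, φ (c i : MvPolynomial (Fin 3) k) * (X 0 ^ av i * X 1 ^ bv i) = 0 := by
      have hu0 : φ u = 0 := by rw [hub, map_mul, hφF, zero_mul]
      calc ∑ i, φ (c i : MvPolynomial (Fin 3) k) * (X 0 ^ av i * X 1 ^ bv i)
          = ∑ i, φ ((c i : MvPolynomial (Fin 3) k) * v i) := by
            refine Finset.sum_congr rfl fun i _ => ?_
            rw [map_mul, hφv i]
        _ = φ (∑ i, (c i : MvPolynomial (Fin 3) k) * v i) := (map_sum φ _ _).symm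
        _ = φ u := by
            rw [← hc]
            simp only [Subalgebra.smul_def, smul_eq_mul]
        _ = 0 := hu0
    have hwh : ∀ i, IsWeightedHomogeneous w10
        (φ (c i : MvPolynomial (Fin 3) k) * (X 0 ^ av i * X 1 ^ bv i))
        ((av i : ZMod 10), bv i) := by
      intro i
      rw [hφc i]
      simpa using (aeval_pow10_wh (r i)).mul (wh_mono (av i) (bv i))
    have hzero := indep w10 _ _ hwh wt_inj hsum
    have hr0 : ∀ i, r i = 0 := by
      intro i
      have hne : (X 0 : MvPolynomial (Fin 2) k) ^ av i * X 1 ^ bv i ≠ 0 :=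
        mul_ne_zero (pow_ne_zero _ (X_ne_zero _)) (pow_ne_zero _ (X_ne_zero _))
      have hc0 : φ (c i : MvPolynomial (Fin 3) k) = 0 := by
        rcases mul_eq_zero.mp (hzero i) with h' | h'
        · exact h'
        · exact absurd h' hne
      have hav : Polynomial.aeval ((X 0 : MvPolynomial (Fin 2) k) ^ 10) (r i) = 0 := by
        rw [← hφc i, hc0]
      by_contra hne0
      exact ((MvPolynomial.transcendental_X k (0 : Fin 2)).pow (by norm_num : 0 < 10))
        ⟨r i, hne0, hav⟩
    refine ⟨∑ i, (⟨aeval ![F, G] (h i), hH i⟩ : A) • v i, ?_, ?_⟩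
    · rw [hM]
      exact Submodule.sum_mem _ fun i _ => Submodule.smul_mem _ _
        (Submodule.subset_span (by rw [hsetv]; exact Set.mem_range_self i))
    · show F * _ = u
      rw [Finset.mul_sum, ← hc]
      refine Finset.sum_congr rfl fun i _ => ?_
      rw [Subalgebra.smul_def, smul_eq_mul, Subalgebra.smul_def, smul_eq_mul,
        hc' i, hr0 i, map_zero, add_zero]
      ring
  · rintro ⟨m, hm, hmu⟩
    refine ⟨?_, m, hmu.symm⟩
    rw [← hmu]
    have := M.smul_mem (⟨F, hFA⟩ : A) hm
    rwa [Subalgebra.smul_def, smul_eq_mul] at this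
end

section
/- Let ℂ[X,Y,Z] be a polynomial ring and I the ideal (Y², XY, X² + YZ). Then (Y + XZ)² ∉ I. Consequently, for the triangular derivation δ = y² ∂_z − (x + 2yz) ∂_u of B = ℂ[x,y][z,u] with kernel A = ℂ[x,y][v], v = xz + y(yu + z²), the square of the Vénéreau polynomial f = y + xv does not lie in the plinth ideal pl(δ) = y²A + xyA + (x² + yv)A. -/
/-!
Along the curve `X = t⁴, Y = t⁷, Z = -t` the generator `X² + YZ` vanishes and `Y²`, `XY` lie in
`(t¹¹)`, whereas `(Y + XZ)² = t¹⁰ (t² - 1)²` does not; so `(Y + XZ)² ∉ (Y², XY, X² + YZ)`.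
For the plinth ideal, `X ↦ x, Y ↦ y, Z ↦ v` identifies `k[X,Y,Z]` with `A = k[x,y,v]` and carries
`(Y + XZ)²` to `f²` and the three generators to those of `pl(δ)`. It is injective because
`x ↦ x, y ↦ y, z ↦ 0, u ↦ Z / Y²` into the fraction field of `k[X,Y,Z]` sends `v` back to `Z`.
-/

open MvPolynomial

variable {k : Type*} [CommRing k]

theorem sq_Y_add_XZ_notMem_span [Nontrivial k] :
    (X 1 + X 0 * X 2 : MvPolynomial (Fin 3) k) ^ 2 ∉
      Ideal.span {X 1 ^ 2, X 0 * X 1, X 0 ^ 2 + X 1 * X 2} := by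
  let ψ : MvPolynomial (Fin 3) k →ₐ[k] Polynomial k :=
    aeval ![Polynomial.X ^ 4, Polynomial.X ^ 7, -Polynomial.X]
  have hspan : Ideal.span {X 1 ^ 2, X 0 * X 1, X 0 ^ 2 + X 1 * X 2} ≤
      (Ideal.span {(Polynomial.X : Polynomial k) ^ 11}).comap ψ := by
    simp only [Ideal.span_le, Set.insert_subset_iff, Set.singleton_subset_iff, SetLike.mem_coe,
      Ideal.mem_comap, Ideal.mem_span_singleton, map_pow, map_mul, map_add, aeval_X,
      Matrix.cons_val, Matrix.cons_val_zero, Matrix.cons_val_one, ψ]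
    exact ⟨⟨Polynomial.X ^ 3, by ring⟩, ⟨1, by ring⟩, ⟨0, by ring⟩⟩
  intro h
  have hdvd := Ideal.mem_span_singleton.mp (Ideal.mem_comap.mp (hspan h))
  have hψ : ψ ((X 1 + X 0 * X 2) ^ 2) =
      Polynomial.X ^ 14 - 2 * Polynomial.X ^ 12 + Polynomial.X ^ 10 := by
    simp only [map_pow, map_mul, map_add, aeval_X, Matrix.cons_val, Matrix.cons_val_zero,
      Matrix.cons_val_one, ψ]
    ring
  rw [hψ, Polynomial.X_pow_dvd_iff] at hdvd
  simpa [Polynomial.coeff_X_pow] using hdvd 10 (by norm_num)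

noncomputable def venereauV : MvPolynomial (Fin 4) k :=
  X 0 * X 2 + X 1 * (X 1 * X 3 + X 2 ^ 2)

noncomputable def kernelParametrization : MvPolynomial (Fin 3) k →ₐ[k] MvPolynomial (Fin 4) k :=
  aeval ![X 0, X 1, venereauV]

theorem range_kernelParametrization :
    (kernelParametrization : MvPolynomial (Fin 3) k →ₐ[k] _).range =
      Algebra.adjoin k {X 0, X 1, venereauV} := by
  rw [kernelParametrization, ← Algebra.adjoin_range_eq_range_aeval]
  simp only [Matrix.range_cons, Matrix.range_empty, Set.union_empty, Set.singleton_union]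

theorem kernelParametrization_injective [IsDomain k] :
    Function.Injective (kernelParametrization : MvPolynomial (Fin 3) k →ₐ[k] _) := by
  let K := FractionRing (MvPolynomial (Fin 3) k)
  let ι : MvPolynomial (Fin 3) k →ₐ[k] K := IsScalarTower.toAlgHom k _ K
  have hY : ι (X 1) ≠ 0 := by simp [ι, X_ne_zero]
  let σ : MvPolynomial (Fin 4) k →ₐ[k] K := aeval ![ι (X 0), ι (X 1), 0, ι (X 2) / ι (X 1) ^ 2]
  have hσ : σ.comp kernelParametrization = ι := by
    ext i
    fin_cases i
    · simp [σ, kernelParametrization]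
    · simp [σ, kernelParametrization]
    · simp [σ, kernelParametrization, venereauV, ← mul_assoc, ← sq,
        mul_div_cancel₀ _ (pow_ne_zero 2 hY)]
  refine .of_comp (f := σ) ?_
  rw [← AlgHom.coe_comp, hσ]
  exact IsFractionRing.injective _ K

theorem sq_venereau_notMem_plinth [IsDomain k] :
    (X 1 + X 0 * venereauV : MvPolynomial (Fin 4) k) ^ 2 ∉
      {w | ∃ a₁ ∈ Algebra.adjoin k {X 0, X 1, venereauV},
        ∃ a₂ ∈ Algebra.adjoin k {X 0, X 1, venereauV},
        ∃ a₃ ∈ Algebra.adjoin k {X 0, X 1, venereauV},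
          w = X 1 ^ 2 * a₁ + X 0 * X 1 * a₂ + (X 0 ^ 2 + X 1 * venereauV) * a₃} := by
  rintro ⟨a₁, ha₁, a₂, ha₂, a₃, ha₃, heq⟩
  rw [← range_kernelParametrization] at ha₁ ha₂ ha₃
  obtain ⟨p₁, rfl⟩ := ha₁
  obtain ⟨p₂, rfl⟩ := ha₂
  obtain ⟨p₃, rfl⟩ := ha₃
  have hpull : (X 1 + X 0 * X 2) ^ 2 = X 1 ^ 2 * p₁ + X 0 * X 1 * p₂ + (X 0 ^ 2 + X 1 * X 2) * p₃ :=
    kernelParametrization_injective (by simpa [kernelParametrization] using heq)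
  apply sq_Y_add_XZ_notMem_span (k := k)
  rw [hpull]
  refine add_mem (add_mem ?_ ?_) ?_ <;> exact Ideal.mul_mem_right _ _ (Ideal.subset_span (by simp))

/-- In `ℂ[X,Y,Z]`, `(Y + XZ)² ∉ (Y², XY, X² + YZ)`. Consequently, for the triangular
derivation `δ = y² ∂_z − (x + 2yz) ∂_u` of `B = ℂ[x,y][z,u]` with kernel
`A = ℂ[x,y][v]`, `v = xz + y(yu + z²)`, the square of the Vénéreau polynomial
`f = y + xv` does not lie in the plinth ideal `pl(δ) = y²A + xyA + (x² + yv)A`. -/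
theorem venereau_square_not_in_plinth :
    ((X 1 + X 0 * X 2 : MvPolynomial (Fin 3) ℂ) ^ 2 ∉
      Ideal.span ({(X 1) ^ 2, X 0 * X 1, (X 0) ^ 2 + X 1 * X 2} :
        Set (MvPolynomial (Fin 3) ℂ))) ∧
    (∀ x y z u v f : MvPolynomial (Fin 4) ℂ,
      x = X 0 → y = X 1 → z = X 2 → u = X 3 →
      v = x * z + y * (y * u + z ^ 2) → f = y + x * v →
      f ^ 2 ∉ {w : MvPolynomial (Fin 4) ℂ |
        ∃ a1 ∈ Algebra.adjoin ℂ ({x, y, v} : Set (MvPolynomial (Fin 4) ℂ)),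
        ∃ a2 ∈ Algebra.adjoin ℂ ({x, y, v} : Set (MvPolynomial (Fin 4) ℂ)),
        ∃ a3 ∈ Algebra.adjoin ℂ ({x, y, v} : Set (MvPolynomial (Fin 4) ℂ)),
          w = y ^ 2 * a1 + x * y * a2 + (x ^ 2 + y * v) * a3}) := by
  refine ⟨sq_Y_add_XZ_notMem_span, ?_⟩
  rintro x y z u v f rfl rfl rfl rfl rfl rfl
  exact sq_venereau_notMem_plinth
end
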